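/- arXiv:0707.0090 — 6 statements merged into one kernel-verified Lean document; each statement's English description precedes it below -/
import Mathlib

section
/- Let k be an algebraically closed field of characteristic zero. Two one-dimensional formal connections [f] and [f'] on k((t)) (where t∂_t acts on the basis vector e by t∂_t(ge) = (t∂_t(g) + fg)e) are isomorphic if and only if f − f' ∈ t·k[[t]] + ℤ. -/
/-- The operator `t∂ₜ` on formal Laurent series, acting coefficientwise by
`(t∂ₜ f).coeff n = n * f.coeff n`. -/
noncomputable def tdt {k : Type*} [Field k] (f : LaurentSeries k) : LaurentSeries k :=
  { coeff := fun n => (n : k) * f.coeff n,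
    isPWO_support' := f.isPWO_support'.mono (by
      intro n hn
      simp only [Function.mem_support, ne_eq] at hn ⊢
      exact fun h => hn (by rw [h, mul_zero])) }

section Aux

variable {k : Type*} [Field k]

open HahnSeries

lemma tdt_coeff (a : LaurentSeries k) (m : ℤ) : (tdt a).coeff m = (m : k) * a.coeff m := rfl

lemma tdt_support (a : LaurentSeries k) : (tdt a).support ⊆ a.support := fun n hn h =>
  hn (by rw [tdt_coeff, h, mul_zero])

lemma tdt_mul (a b : LaurentSeries k) : tdt (a * b) = tdt a * b + a * tdt b := by
  ext p
  rw [HahnSeries.coeff_add,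
    HahnSeries.coeff_mul_left' a.isPWO_support (tdt_support a),
    HahnSeries.coeff_mul_right' b.isPWO_support (tdt_support b), tdt_coeff,
    HahnSeries.coeff_mul, Finset.mul_sum, ← Finset.sum_add_distrib]
  apply Finset.sum_congr rfl
  intro ij hij
  rw [Finset.mem_addAntidiagonal] at hij
  rw [tdt_coeff, tdt_coeff, ← hij.2.2]
  push_cast
  ring

lemma tdt_single (a : ℤ) (r : k) :
    tdt (HahnSeries.single a r) = HahnSeries.single a ((a : k) * r) := by
  ext m
  rw [tdt_coeff, HahnSeries.coeff_single, HahnSeries.coeff_single]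
  split_ifs with h
  · subst h; rfl
  · rw [mul_zero]

lemma tdt_one : tdt (1 : LaurentSeries k) = 0 := by
  have : (1 : LaurentSeries k) = HahnSeries.single (0 : ℤ) (1 : k) := rfl
  rw [this, tdt_single]
  simp

lemma intCast_coeff (n : ℤ) (m : ℤ) :
    ((n : LaurentSeries k)).coeff m = if m = 0 then (n : k) else 0 := by
  have h1 : ((n : LaurentSeries k)) = HahnSeries.C ((n : ℤ) : k) :=
    (map_intCast (HahnSeries.C : k →+* LaurentSeries k) n).symm
  rw [h1, HahnSeries.C_apply, HahnSeries.coeff_single]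
  split_ifs <;> rfl

/-- Recursive solution to `t∂ₜ v = W v` with `v 0 = 1`, for `W` a power series with zero
constant term. -/
noncomputable def sol (W : PowerSeries k) : ℕ → k
  | 0 => 1
  | (m + 1) => (((m : ℕ) + 1 : k))⁻¹ *
      ∑ i ∈ Finset.range (m + 1), (PowerSeries.coeff (i + 1) W) * sol W (m - i)
  decreasing_by omega

lemma sol_spec [CharZero k] (W : PowerSeries k) (hW : PowerSeries.coeff 0 W = 0) (m : ℕ) :
    (m : k) * sol W m =
      ∑ p ∈ Finset.HasAntidiagonal.antidiagonal m, PowerSeries.coeff p.1 W * sol W p.2 := by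
  cases m with
  | zero => simp [hW]
  | succ m =>
    rw [Finset.Nat.sum_antidiagonal_eq_sum_range_succ
      (f := fun i j => PowerSeries.coeff i W * sol W j), Finset.sum_range_succ', hW, zero_mul,
      add_zero]
    simp only [Nat.succ_sub_succ_eq_sub]
    have hne : ((m : k) + 1) ≠ 0 := by
      have : ((m : k) + 1) = ((m + 1 : ℕ) : k) := by push_cast; ring
      rw [this]
      exact Nat.cast_ne_zero.mpr (Nat.succ_ne_zero m)
    rw [sol, ← mul_assoc]
    rw [show ((m + 1 : ℕ) : k) = ((m : k) + 1) by push_cast; ring, mul_inv_cancel₀ hne, one_mul]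

lemma tdt_sol [CharZero k] (W : PowerSeries k) (hW : PowerSeries.coeff 0 W = 0) :
    tdt ((PowerSeries.mk (sol W) : PowerSeries k) : LaurentSeries k) =
      ((W : LaurentSeries k)) * ((PowerSeries.mk (sol W) : PowerSeries k) : LaurentSeries k) := by
  rw [← PowerSeries.coe_mul]
  ext m
  rw [tdt_coeff, PowerSeries.coeff_coe, PowerSeries.coeff_coe]
  rcases lt_or_ge m 0 with hm | hm
  · rw [if_pos hm, if_pos hm, mul_zero]
  · obtain ⟨j, rfl⟩ := Int.eq_ofNat_of_zero_le hm
    rw [if_neg (not_lt.mpr hm), if_neg (not_lt.mpr hm)]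
    simp only [Int.natAbs_natCast, Int.cast_natCast]
    rw [PowerSeries.coeff_mk, PowerSeries.coeff_mul, sol_spec W hW]
    apply Finset.sum_congr rfl
    intro p _
    rw [PowerSeries.coeff_mk]

end Aux

/-- Two one-dimensional formal connections `[f]` and `[f']` on `k((t))` (where the connection
`[f]` acts on `g·e` by `t∂ₜ(g·e) = (t∂ₜ(g) + f·g)·e`) are isomorphic — i.e. there is a nonzero
`k((t))`-linear map, necessarily multiplication by a nonzero `u`, intertwining the two actions —
if and only if `f - f' ∈ t·k[[t]] + ℤ`. -/
theorem one_dim_connections_isomorphic_iff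
    {k : Type*} [Field k] [CharZero k] [IsAlgClosed k] (f f' : LaurentSeries k) :
    (∃ u : LaurentSeries k, u ≠ 0 ∧
        ∀ g : LaurentSeries k, tdt (u * g) + f' * (u * g) = u * (tdt g + f * g)) ↔
      ∃ n : ℤ, ∀ m : ℤ, m ≤ 0 → (f - f' - (n : LaurentSeries k)).coeff m = 0 := by
  constructor
  · rintro ⟨u, hu, hcom⟩
    have key := hcom 1
    rw [mul_one, tdt_one, zero_add, mul_one] at key
    -- key : tdt u + f' * u = u * f
    have h1 : tdt u = (f - f') * u := by linear_combination key
    set d := f - f' with hd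
    by_cases hd0 : d = 0
    · refine ⟨0, fun m _ => ?_⟩
      simp [hd0]
    · have hcoeff : ∀ m : ℤ, (d * u).coeff m = (m : k) * u.coeff m := by
        intro m; rw [← h1, tdt_coeff]
      have hlead : (d * u).coeff (d.order + u.order) = d.coeff d.order * u.coeff u.order := by
        rw [HahnSeries.coeff_mul_order_add_order, HahnSeries.leadingCoeff_eq,
          HahnSeries.leadingCoeff_eq]
      have hne : d.coeff d.order * u.coeff u.order ≠ 0 :=
        mul_ne_zero (by rw [← HahnSeries.leadingCoeff_eq]; exact HahnSeries.leadingCoeff_ne_zero.mpr hd0)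
          (by rw [← HahnSeries.leadingCoeff_eq]; exact HahnSeries.leadingCoeff_ne_zero.mpr hu)
      have hord : 0 ≤ d.order := by
        by_contra hlt
        push_neg at hlt
        have h2 : d.order + u.order < u.order := by linarith
        have h3 : u.coeff (d.order + u.order) = 0 := HahnSeries.coeff_eq_zero_of_lt_order h2
        exact hne (by rw [← hlead, hcoeff, h3, mul_zero])
      rcases hord.lt_or_eq with hpos | hzero
      · refine ⟨0, fun m hm => ?_⟩
        have : d.coeff m = 0 :=
          HahnSeries.coeff_eq_zero_of_lt_order (lt_of_le_of_lt hm hpos)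
        rw [HahnSeries.coeff_sub, this, intCast_coeff]
        simp
      · have h0 : d.coeff 0 = (u.order : k) := by
          have e1 : (d * u).coeff (0 + u.order) = d.coeff 0 * u.coeff u.order := by
            rw [← hzero] at hlead; exact hlead
          have e2 := hcoeff (0 + u.order)
          rw [e1] at e2
          rw [zero_add] at e2
          have huo : u.coeff u.order ≠ 0 := by
            rw [← HahnSeries.leadingCoeff_eq]; exact HahnSeries.leadingCoeff_ne_zero.mpr hu
          exact mul_right_cancel₀ huo e2
        refine ⟨u.order, fun m hm => ?_⟩
        rw [HahnSeries.coeff_sub, intCast_coeff]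
        rcases hm.lt_or_eq with hlt | hrfl
        · have : d.coeff m = 0 := by
            apply HahnSeries.coeff_eq_zero_of_lt_order
            rw [← hzero]; exact hlt
          rw [this, if_neg hlt.ne]
          simp
        · rw [hrfl, if_pos rfl, h0, sub_self]
  · rintro ⟨n, hn⟩
    set d := f - f' with hd
    have hdm : ∀ m : ℤ, m ≤ 0 → d.coeff m = if m = 0 then (n : k) else 0 := by
      intro m hm
      have := hn m hm
      rw [HahnSeries.coeff_sub, intCast_coeff, sub_eq_zero] at this
      exact this
    set W : PowerSeries k := PowerSeries.mk (fun j => if j = 0 then 0 else d.coeff j) with hW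
    have hW0 : PowerSeries.coeff 0 W = 0 := by rw [hW, PowerSeries.coeff_mk, if_pos rfl]
    have hWc : ∀ j : ℕ, PowerSeries.coeff j W = if j = 0 then 0 else d.coeff j := by
      intro j; rw [hW, PowerSeries.coeff_mk]
    have hd_eq : d = (n : LaurentSeries k) + (W : LaurentSeries k) := by
      ext m
      rw [HahnSeries.coeff_add, intCast_coeff, PowerSeries.coeff_coe]
      rcases lt_or_ge m 0 with hm | hm
      · rw [if_pos hm, if_neg hm.ne, hdm m hm.le, if_neg hm.ne, add_zero]
      · obtain ⟨j, rfl⟩ := Int.eq_ofNat_of_zero_le hm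
        rw [if_neg (not_lt.mpr hm)]
        simp only [Int.natAbs_natCast]
        rw [hWc]
        rcases Nat.eq_zero_or_pos j with h0 | hp
        · subst h0
          have h00 := hdm 0 le_rfl
          rw [if_pos rfl] at h00
          simp [h00]
        · rw [if_neg (by omega : ¬ ((j : ℤ) = 0)), if_neg (by omega : ¬ (j = 0)), zero_add]
    set v : PowerSeries k := PowerSeries.mk (sol W) with hv
    set V : LaurentSeries k := (v : LaurentSeries k) with hV
    have hV0 : V.coeff 0 = 1 := by
      rw [hV, ← Int.natCast_zero, PowerSeries.coeff_coe]
      simp [hv, sol]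
    have hVne : V ≠ 0 := by
      intro h
      rw [h] at hV0
      simp at hV0
    set u : LaurentSeries k := HahnSeries.single n 1 * V with hu
    have hune : u ≠ 0 := mul_ne_zero (HahnSeries.single_ne_zero one_ne_zero) hVne
    have htV : tdt V = (W : LaurentSeries k) * V := tdt_sol W hW0
    have hcast : (n : LaurentSeries k) * HahnSeries.single n (1 : k) =
        HahnSeries.single n ((n : k)) := by
      have h1 : ((n : LaurentSeries k)) = HahnSeries.C ((n : ℤ) : k) :=
        (map_intCast (HahnSeries.C : k →+* LaurentSeries k) n).symm
      rw [h1, HahnSeries.C_apply, HahnSeries.single_mul_single, zero_add, mul_one]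
    have htu : tdt u = d * u := by
      rw [hu, tdt_mul, tdt_single, htV, hd_eq, mul_one, ← hcast]
      ring
    refine ⟨u, hune, fun g => ?_⟩
    rw [tdt_mul, htu, hd]
    ring
end

section
/- Every irreducible regular formal connection on k((t)) is isomorphic to a one-dimensional connection [c] for some c ∈ k; consequently every regular formal connection on k((t)) is a successive extension of connections of the form [c]. -/
section Connection

variable (k : Type*) [Field k] (M : Type*) [AddCommGroup M] [Module (LaurentSeries k) M]

/-- A formal connection structure: `D` is additive and satisfies the Leibniz rule
`D(f • m) = t∂ₜ(f) • m + f • D m` (hence is `k`-linear). -/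
def IsConnection (D : M → M) : Prop :=
  (∀ x y : M, D (x + y) = D x + D y) ∧
  (∀ (f : LaurentSeries k) (m : M), D (f • m) = tdt f • m + f • D m)

/-- A lattice in `M`: an additive subgroup stable under multiplication by `k[[t]]`,
finitely generated over `k[[t]]`, and generating `M` over `k((t))`. -/
def IsLattice (L : AddSubgroup M) : Prop :=
  (∀ p : PowerSeries k, ∀ x ∈ L, (HahnSeries.ofPowerSeries ℤ k p) • x ∈ L) ∧
  (∃ S : Finset M, (↑S : Set M) ⊆ L ∧ ∀ x ∈ L, ∃ cf : M → PowerSeries k,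
      x = ∑ m ∈ S, (HahnSeries.ofPowerSeries ℤ k (cf m)) • m) ∧
  (∀ m : M, ∃ n : ℕ, (HahnSeries.single (n : ℤ) (1 : k) : LaurentSeries k) • m ∈ L)

/-- A good lattices pair `(V, W)` for the connection `D`: `V ⊆ W`, `t∂ₜ(V) ⊆ W`, and for each
`n ∈ ℕ` the inclusion of complexes `(V → W) → (t^{-n}V → t^{-n}W)` is a quasi-isomorphism. -/
def IsGoodLatticesPair (D : M → M) (V W : AddSubgroup M) : Prop :=
  IsLattice k M V ∧ IsLattice k M W ∧
  ((V : Set M) ⊆ (W : Set M)) ∧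
  (∀ x ∈ V, D x ∈ W) ∧
  (∀ n : ℕ,
    (∀ m : M, (HahnSeries.single (n : ℤ) (1 : k) : LaurentSeries k) • m ∈ V → D m = 0 → m ∈ V) ∧
    (∀ m : M, (HahnSeries.single (n : ℤ) (1 : k) : LaurentSeries k) • m ∈ V → D m ∈ W →
      ∃ v ∈ V, D v = D m) ∧
    (∀ w : M, (HahnSeries.single (n : ℤ) (1 : k) : LaurentSeries k) • w ∈ W →
      ∃ m : M, (HahnSeries.single (n : ℤ) (1 : k) : LaurentSeries k) • m ∈ V ∧ w - D m ∈ W))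

/-- A connection is regular if its irregularity is `0`, i.e. it admits a good lattices pair
`(V, W)` with `V = W`. -/
def IsRegularConnection (D : M → M) : Prop :=
  ∃ V : AddSubgroup M, IsGoodLatticesPair k M D V V

end Connection

namespace LeveltAux

variable {k : Type*} [Field k]

lemma tdt_coeff (f : LaurentSeries k) (n : ℤ) : (tdt f).coeff n = (n : k) * f.coeff n := rfl

/-- `t d/dt` on power series. -/
noncomputable def psTdt (p : PowerSeries k) : PowerSeries k :=
  PowerSeries.mk fun n => (n : k) * PowerSeries.coeff n p

lemma tdt_coe (p : PowerSeries k) :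
    tdt ((p : PowerSeries k) : LaurentSeries k) = ((psTdt p : PowerSeries k) : LaurentSeries k) := by
  ext n
  rw [tdt_coeff, PowerSeries.coeff_coe, PowerSeries.coeff_coe]
  split_ifs with h
  · simp
  · simp only [psTdt, PowerSeries.coeff_mk]
    congr 1
    rw [← Int.cast_natCast (R := k), Int.natAbs_of_nonneg (not_lt.mp h)]

lemma exists_single_mul_coe (f : LaurentSeries k) :
    ∃ (n : ℕ) (p : PowerSeries k),
      (HahnSeries.single (n : ℤ) 1 : LaurentSeries k) * f = (p : LaurentSeries k) := by
  rcases eq_or_ne f 0 with rfl | hf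
  · exact ⟨0, 0, by simp⟩
  · set n : ℕ := (-f.order).toNat with hn
    have hord : (n : ℤ) + f.order ≥ 0 := by
      have := Int.self_le_toNat (-f.order)
      omega
    set a : ℕ := ((n : ℤ) + f.order).toNat with ha
    have haz : (a : ℤ) = (n : ℤ) + f.order := Int.toNat_of_nonneg hord
    refine ⟨n, PowerSeries.X ^ a * f.powerSeriesPart, ?_⟩
    conv_lhs => rw [← f.single_order_mul_powerSeriesPart]
    rw [← mul_assoc, HahnSeries.single_mul_single, one_mul, PowerSeries.coe_mul,
      PowerSeries.coe_pow, PowerSeries.coe_X, HahnSeries.single_pow, one_pow, ← haz]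
    simp [nsmul_eq_mul]

lemma exists_single_mul_coe_finset {ι : Type*} (s : Finset ι) (g : ι → LaurentSeries k) :
    ∃ (N : ℕ) (q : ι → PowerSeries k), ∀ i ∈ s,
      (HahnSeries.single (N : ℤ) 1 : LaurentSeries k) * g i = (q i : LaurentSeries k) := by
  choose n p hp using fun i => exists_single_mul_coe (g i)
  refine ⟨s.sup n, fun i => PowerSeries.X ^ (s.sup n - n i) * p i, fun i hi => ?_⟩
  have hle : n i ≤ s.sup n := Finset.le_sup hi
  have h1 : (((s.sup n : ℕ)) : ℤ) = ((s.sup n - n i : ℕ) : ℤ) + (n i : ℤ) := by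
    omega
  have key : (HahnSeries.single ((s.sup n : ℕ) : ℤ) (1:k) : LaurentSeries k) =
      HahnSeries.single ((s.sup n - n i : ℕ) : ℤ) (1:k) * HahnSeries.single ((n i : ℕ) : ℤ) (1:k) := by
    rw [HahnSeries.single_mul_single, one_mul, ← h1]
  rw [key, mul_assoc, hp i, PowerSeries.coe_mul,
    PowerSeries.coe_pow, PowerSeries.coe_X, HahnSeries.single_pow, one_pow]
  simp [nsmul_eq_mul]

/-- Recursively defined sequence. -/
noncomputable def recSeq {α : Type*} (d : α) (step : ℕ → (ℕ → α) → α) : ℕ → α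
  | n => step n (fun m => if h : m < n then recSeq d step m else d)

lemma recSeq_eq {α : Type*} (d : α) (step : ℕ → (ℕ → α) → α) (n : ℕ) :
    recSeq d step n = step n (fun m => if h : m < n then recSeq d step m else d) := by
  rw [recSeq]

end LeveltAux

namespace LeveltAux

variable {k : Type*} [Field k]

theorem exists_eigenvector [CharZero k] [IsAlgClosed k]
    {M : Type*} [AddCommGroup M] [Module (LaurentSeries k) M]
    (D : M → M) (hconn : IsConnection k M D)
    (V : AddSubgroup M) (hlat : IsLattice k M V)
    (hstab : ∀ x ∈ V, D x ∈ V) (hM : Nontrivial M) :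
    ∃ (c : k) (m : M), m ≠ 0 ∧ D m = (HahnSeries.C c : LaurentSeries k) • m := by
  classical
  obtain ⟨hsmul, ⟨S, hSV, hSgen⟩, hden⟩ := hlat
  letI : Module (PowerSeries k) M := Module.compHom M (HahnSeries.ofPowerSeries ℤ k)
  have smul_def : ∀ (p : PowerSeries k) (x : M),
      p • x = (HahnSeries.ofPowerSeries ℤ k p) • x := fun _ _ => rfl
  set V' : Submodule (PowerSeries k) M :=
    { carrier := V
      add_mem' := fun ha hb => V.add_mem ha hb
      zero_mem' := V.zero_mem
      smul_mem' := fun p x hx => hsmul p x hx } with hV'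
  have memV' : ∀ x : M, x ∈ V' ↔ x ∈ V := fun x => Iff.rfl
  haveI : Module.Finite (PowerSeries k) V' := by
    rw [Module.Finite.iff_fg]
    refine ⟨S, le_antisymm (Submodule.span_le.mpr hSV) ?_⟩
    intro x hx
    obtain ⟨cf, hcf⟩ := hSgen x hx
    rw [hcf]
    exact Submodule.sum_mem _ fun m hm => by
      rw [← smul_def]
      exact Submodule.smul_mem _ _ (Submodule.subset_span hm)
  haveI : NoZeroSMulDivisors (PowerSeries k) V' := by
    refine ⟨fun {p x} hpx => ?_⟩
    by_cases hp : p = 0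
    · exact Or.inl hp
    · right
      have hco : (HahnSeries.ofPowerSeries ℤ k p) • (x : M) = 0 := by
        have h2 := congrArg Subtype.val hpx
        rw [Submodule.coe_smul, ZeroMemClass.coe_zero] at h2
        exact h2
      have hpne : (HahnSeries.ofPowerSeries ℤ k p) ≠ 0 := by
        intro h
        apply hp
        apply HahnSeries.ofPowerSeries_injective (Γ := ℤ)
        rw [h, map_zero]
      have hx0 : (x : M) = 0 := by
        have h3 := congrArg (fun y => (HahnSeries.ofPowerSeries ℤ k p)⁻¹ • y) hco
        simp only [smul_smul, inv_mul_cancel₀ hpne, one_smul, smul_zero] at h3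
        exact h3
      exact Subtype.ext hx0
  haveI : Module.Free (PowerSeries k) V' := Module.free_of_finite_type_torsion_free'
  set ι := Module.Free.ChooseBasisIndex (PowerSeries k) V' with hι
  set b : Module.Basis ι (PowerSeries k) V' := Module.Free.chooseBasis _ _ with hb
  set e : ι → M := fun i => (b i : M) with he
  -- spanning
  have hspan : ∀ x : M, x ∈ Submodule.span (LaurentSeries k) (Set.range e) := by
    intro x
    obtain ⟨n, hn⟩ := hden x
    have hx := (b.sum_repr ⟨_, hn⟩).symm
    have hxM : (HahnSeries.single (n : ℤ) 1 : LaurentSeries k) • x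
        = ∑ i, (HahnSeries.ofPowerSeries ℤ k (b.repr ⟨_, hn⟩ i)) • e i := by
      have := congrArg (Subtype.val) hx
      simp only [Submodule.coe_sum, Submodule.coe_smul] at this
      exact this
    have hsx : x = (HahnSeries.single (-(n : ℤ)) 1 : LaurentSeries k) •
        ((HahnSeries.single (n : ℤ) 1 : LaurentSeries k) • x) := by
      rw [smul_smul, HahnSeries.single_mul_single, neg_add_cancel, one_mul,
        HahnSeries.single_zero_one, one_smul]
    rw [hsx, hxM, Finset.smul_sum]
    exact Submodule.sum_mem _ fun i _ => by
      rw [smul_smul]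
      exact Submodule.smul_mem _ _ (Submodule.subset_span ⟨i, rfl⟩)
  -- linear independence
  have hLI : LinearIndependent (LaurentSeries k) e := by
    rw [Fintype.linearIndependent_iff]
    intro g hg
    obtain ⟨N, q, hq⟩ := exists_single_mul_coe_finset Finset.univ g
    have hsum : ∑ i, ((q i : PowerSeries k) : LaurentSeries k) • e i = 0 := by
      have : ∑ i, ((q i : PowerSeries k) : LaurentSeries k) • e i
          = (HahnSeries.single (N : ℤ) 1 : LaurentSeries k) • ∑ i, g i • e i := by
        rw [Finset.smul_sum]
        refine Finset.sum_congr rfl fun i _ => ?_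
        rw [← hq i (Finset.mem_univ i), mul_smul]
      rw [this, hg, smul_zero]
    have hVsum : (∑ i, q i • b i : V') = 0 := by
      apply Subtype.ext
      rw [Submodule.coe_sum, ZeroMemClass.coe_zero]
      exact hsum
    have hq0 : ∀ i, q i = 0 := by
      have := Fintype.linearIndependent_iff.mp b.linearIndependent q hVsum
      exact this
    intro i
    have := hq i (Finset.mem_univ i)
    rw [hq0 i] at this
    simp only [PowerSeries.coe_zero] at this
    rcases mul_eq_zero.mp this with h | h
    · exact absurd h (HahnSeries.single_ne_zero one_ne_zero)
    · exact h
  -- nonempty index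
  haveI : Nonempty ι := by
    by_contra hne
    haveI := not_nonempty_iff.mp hne
    obtain ⟨x, y, hxy⟩ := hM
    apply hxy
    have hx := hspan x
    have hy := hspan y
    rw [Set.range_eq_empty e, Submodule.span_empty, Submodule.mem_bot] at hx hy
    rw [hx, hy]
  -- matrix of the connection in the basis b
  set w : ι → V' := fun i => ⟨D (e i), hstab _ (b i).2⟩ with hwdef
  set A : ι → ι → PowerSeries k := fun i j => b.repr (w i) j with hA
  have hDe : ∀ i, D (e i) = ∑ j, (HahnSeries.ofPowerSeries ℤ k (A i j)) • e j := by
    intro i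
    calc D (e i) = ((∑ j, b.repr (w i) j • b j : V') : M) := by rw [b.sum_repr (w i)]
    _ = ∑ j, (HahnSeries.ofPowerSeries ℤ k (A i j)) • e j := by
        rw [Submodule.coe_sum]
        exact Finset.sum_congr rfl fun j _ => by rw [Submodule.coe_smul]; exact smul_def _ _
  -- the residue endomorphism and its coefficient shifts
  set Tmap : ℕ → (ι → k) → (ι → k) :=
    fun p v j => ∑ i, (PowerSeries.coeff p (A i j)) * v i with hT
  have Tadd : ∀ p u v, Tmap p (u + v) = Tmap p u + Tmap p v := by
    intro p u v; funext j
    simp [hT, mul_add, Finset.sum_add_distrib]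
  have Tsmul : ∀ (p : ℕ) (a : k) (v : ι → k), Tmap p (a • v) = a • Tmap p v := by
    intro p a v; funext j
    simp only [hT, Pi.smul_apply, smul_eq_mul, Finset.mul_sum]
    exact Finset.sum_congr rfl fun i _ => by ring
  set B : Module.End k (ι → k) :=
    { toFun := Tmap 0, map_add' := Tadd 0, map_smul' := fun a v => Tsmul 0 a v } with hB
  haveI : Nontrivial (ι → k) := by infer_instance
  obtain ⟨μ₀, hμ₀⟩ := Module.End.exists_eigenvalue B
  set SS : Set ℕ := (fun n : ℕ => μ₀ - (n : k)) ⁻¹' (fun μ => B.HasEigenvalue μ) with hSS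
  have hSSfin : SS.Finite := by
    have hinj : Set.InjOn (fun n : ℕ => μ₀ - (n : k)) SS := by
      intro a _ b _ hab
      have h1 : (a : k) = b := by linear_combination -hab
      exact_mod_cast h1
    exact Set.Finite.preimage hinj B.finite_hasEigenvalue
  have h0SS : (0 : ℕ) ∈ SS := by
    show B.HasEigenvalue (μ₀ - ((0:ℕ) : k))
    simpa using hμ₀
  have hSne : hSSfin.toFinset.Nonempty := ⟨0, hSSfin.mem_toFinset.mpr h0SS⟩
  set nstar := hSSfin.toFinset.max' hSne with hnstar
  set c : k := μ₀ - nstar with hc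
  have hceig : B.HasEigenvalue c := by
    have h1 := hSSfin.toFinset.max'_mem hSne
    rw [Set.Finite.mem_toFinset] at h1
    exact h1
  have hcs : ∀ m : ℕ, 0 < m → ¬ B.HasEigenvalue (c - m) := by
    intro m hm hE
    have h1 : (nstar + m : ℕ) ∈ SS := by
      show B.HasEigenvalue (μ₀ - ((nstar + m : ℕ) : k))
      have h2 : μ₀ - ((nstar + m : ℕ) : k) = c - m := by push_cast [hc]; ring
      rw [h2]; exact hE
    have hle := hSSfin.toFinset.le_max' _ (hSSfin.mem_toFinset.mpr h1)
    omega
  obtain ⟨v₀, hv₀⟩ := hceig.exists_hasEigenvector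
  have hv₀eq : B v₀ = c • v₀ := Module.End.mem_eigenspace_iff.mp hv₀.1
  have hv₀ne : v₀ ≠ 0 := hv₀.2
  -- solvability of the recursion step
  have hsolv : ∀ n : ℕ, 0 < n → Function.Surjective
      (fun v : ι → k => B v + ((n : k) - c) • v) := by
    intro n hn
    set Bn : Module.End k (ι → k) := B + ((n:k) - c) • (1 : Module.End k (ι → k)) with hBn
    have happ : ∀ v, Bn v = B v + ((n : k) - c) • v := by
      intro v
      simp [hBn]
    have hinj : Function.Injective Bn := by
      rw [← LinearMap.ker_eq_bot, LinearMap.ker_eq_bot']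
      intro v hv
      by_contra hvne
      have h1 : B v = (c - n) • v := by
        have := happ v
        rw [hv] at this
        have h2 : B v + ((n:k) - c) • v = 0 := this.symm
        have h3 : B v = -(((n:k) - c) • v) := by
          rw [eq_neg_iff_add_eq_zero]; exact h2
        rw [h3, ← neg_smul]; congr 1; ring
      exact hcs n hn (Module.End.hasEigenvalue_of_hasEigenvector
        ⟨Module.End.mem_eigenspace_iff.mpr h1, hvne⟩)
    have hsurj := LinearMap.injective_iff_surjective.mp hinj
    intro y
    obtain ⟨v, hv⟩ := hsurj y
    exact ⟨v, by show B v + ((n : k) - c) • v = y; rw [← happ v]; exact hv⟩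
  -- the recursively defined coefficients
  set step : ℕ → (ℕ → (ι → k)) → (ι → k) := fun n prev =>
    if hn : n = 0 then v₀
    else Classical.choose (hsolv n (Nat.pos_of_ne_zero hn)
      (-(∑ m ∈ Finset.range n, Tmap (n - m) (prev m)))) with hstep
  set f : ℕ → (ι → k) := recSeq 0 step with hfdef0
  have hfdef : ∀ n, f n = step n (fun m => if h : m < n then f m else 0) :=
    fun n => recSeq_eq 0 step n
  have hf0 : f 0 = v₀ := by
    rw [hfdef 0]
    simp [hstep]
  have hfn : ∀ n : ℕ, 0 < n →
      B (f n) + ((n:k) - c) • f n = -(∑ m ∈ Finset.range n, Tmap (n - m) (f m)) := by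
    intro n hn
    have hnne : n ≠ 0 := Nat.pos_iff_ne_zero.mp hn
    have h1 := hfdef n
    rw [hstep] at h1
    simp only [dif_neg hnne] at h1
    have h2 := Classical.choose_spec (hsolv n (Nat.pos_of_ne_zero hnne)
      (-(∑ m ∈ Finset.range n, Tmap (n - m) (if h : m < n then f m else 0))))
    rw [← h1] at h2
    have hy : -(∑ m ∈ Finset.range n, Tmap (n - m) (if h : m < n then f m else 0))
        = -(∑ m ∈ Finset.range n, Tmap (n - m) (f m)) := by
      congr 1
      exact Finset.sum_congr rfl fun m hm => by rw [dif_pos (Finset.mem_range.mp hm)]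
    exact h2.trans hy
  -- the key recurrence
  have hkey : ∀ n : ℕ, (n : k) • f n + (∑ m ∈ Finset.range (n+1), Tmap (n - m) (f m))
      = c • f n := by
    intro n
    rcases Nat.eq_zero_or_pos n with rfl | hn
    · rw [Finset.sum_range_one, hf0]
      show ((0:ℕ):k) • v₀ + Tmap 0 v₀ = c • v₀
      rw [Nat.cast_zero, zero_smul, zero_add]
      exact hv₀eq
    · have h1 := hfn n hn
      rw [Finset.sum_range_succ, Nat.sub_self]
      have h2 : Tmap 0 (f n) = B (f n) := rfl
      rw [h2]
      have h3 : B (f n) = -(∑ m ∈ Finset.range n, Tmap (n - m) (f m)) - ((n:k) - c) • f n :=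
        eq_sub_of_add_eq h1
      rw [h3]
      module
  -- the eigenvector power series
  set g : ι → PowerSeries k := fun i => PowerSeries.mk fun n => f n i with hg
  have hgscalar : ∀ j, psTdt (g j) + ∑ i, g i * A i j = PowerSeries.C c * (g j) := by
    intro j
    ext n
    rw [map_add, PowerSeries.coeff_C_mul, map_sum]
    have hmul : ∀ i, PowerSeries.coeff n (g i * A i j)
        = ∑ m ∈ Finset.range (n+1), f m i * PowerSeries.coeff (n - m) (A i j) := by
      intro i
      rw [PowerSeries.coeff_mul, Finset.Nat.sum_antidiagonal_eq_sum_range_succ_mk]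
      exact Finset.sum_congr rfl fun m _ => by rw [hg]; simp [PowerSeries.coeff_mk]
    rw [Finset.sum_congr rfl fun i _ => hmul i, Finset.sum_comm]
    have hTsum : ∑ m ∈ Finset.range (n+1), ∑ i, f m i * PowerSeries.coeff (n - m) (A i j)
        = (∑ m ∈ Finset.range (n+1), Tmap (n - m) (f m)) j := by
      rw [Finset.sum_apply]
      exact Finset.sum_congr rfl fun m _ => by
        rw [hT]
        exact Finset.sum_congr rfl fun i _ => by ring
    rw [hTsum]
    have hkj := congrFun (hkey n) j
    simp only [Pi.add_apply, Pi.smul_apply, smul_eq_mul] at hkj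
    have hcoeff : PowerSeries.coeff n (psTdt (g j)) = (n : k) * f n j := by
      simp [psTdt, hg, PowerSeries.coeff_mk]
    rw [hcoeff]
    have hgj : PowerSeries.coeff n (g j) = f n j := by simp [hg, PowerSeries.coeff_mk]
    rw [hgj]
    exact hkj
  -- transfer to Laurent series
  have hgL : ∀ j, tdt ((g j : PowerSeries k) : LaurentSeries k)
      + ∑ i, ((g i : PowerSeries k) : LaurentSeries k) *
          ((A i j : PowerSeries k) : LaurentSeries k)
      = (HahnSeries.C c : LaurentSeries k) * ((g j : PowerSeries k) : LaurentSeries k) := by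
    intro j
    rw [tdt_coe]
    have h2 := congrArg (fun p : PowerSeries k => (HahnSeries.ofPowerSeries ℤ k) p) (hgscalar j)
    simp only [map_add, map_sum, map_mul] at h2
    rw [HahnSeries.ofPowerSeries_C] at h2
    exact h2
  -- the eigenvector
  set m₀ : M := ∑ i, ((g i : PowerSeries k) : LaurentSeries k) • e i with hm₀
  have hD0 : D 0 = 0 := by
    have h1 := hconn.1 0 0
    rw [add_zero] at h1
    exact (left_eq_add.mp h1)
  have hDsum : ∀ (x : ι → M), D (∑ i, x i) = ∑ i, D (x i) := by
    intro x
    classical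
    induction (Finset.univ : Finset ι) using Finset.cons_induction with
    | empty => simpa using hD0
    | cons a s ha ih => rw [Finset.sum_cons, Finset.sum_cons, hconn.1, ih]
  have hDm₀ : D m₀ = (HahnSeries.C c : LaurentSeries k) • m₀ := by
    rw [hm₀, hDsum]
    calc ∑ i, D (((g i : PowerSeries k) : LaurentSeries k) • e i)
        = ∑ i, (tdt ((g i : PowerSeries k) : LaurentSeries k) • e i
            + ((g i : PowerSeries k) : LaurentSeries k) • D (e i)) :=
          Finset.sum_congr rfl fun i _ => hconn.2 _ _
      _ = ∑ i, tdt ((g i : PowerSeries k) : LaurentSeries k) • e i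
            + ∑ i, ∑ j, (((g i : PowerSeries k) : LaurentSeries k) *
                ((A i j : PowerSeries k) : LaurentSeries k)) • e j := by
          rw [Finset.sum_add_distrib]
          congr 1
          refine Finset.sum_congr rfl fun i _ => ?_
          rw [hDe i, Finset.smul_sum]
          exact Finset.sum_congr rfl fun j _ => by rw [smul_smul]
      _ = ∑ j, (tdt ((g j : PowerSeries k) : LaurentSeries k)
            + ∑ i, ((g i : PowerSeries k) : LaurentSeries k) *
                ((A i j : PowerSeries k) : LaurentSeries k)) • e j := by
          rw [Finset.sum_comm]
          rw [← Finset.sum_add_distrib]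
          refine Finset.sum_congr rfl fun j _ => ?_
          rw [add_smul, Finset.sum_smul]
      _ = ∑ j, ((HahnSeries.C c : LaurentSeries k) *
            ((g j : PowerSeries k) : LaurentSeries k)) • e j :=
          Finset.sum_congr rfl fun j _ => by rw [hgL j]
      _ = (HahnSeries.C c : LaurentSeries k) • ∑ j, ((g j : PowerSeries k) : LaurentSeries k) • e j := by
          rw [Finset.smul_sum]
          exact Finset.sum_congr rfl fun j _ => (mul_smul _ _ _)
  have hm₀ne : m₀ ≠ 0 := by
    intro h0
    have h1 := Fintype.linearIndependent_iff.mp hLI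
      (fun i => ((g i : PowerSeries k) : LaurentSeries k)) (by rw [← hm₀]; exact h0)
    apply hv₀ne
    funext i
    have h2 : g i = 0 := by
      apply HahnSeries.ofPowerSeries_injective (Γ := ℤ)
      rw [map_zero]
      exact h1 i
    have h3 : f 0 i = PowerSeries.coeff 0 (g i) := by simp [hg, PowerSeries.coeff_mk]
    rw [← hf0]
    show f 0 i = (0 : ι → k) i
    rw [h3, h2, map_zero]
    rfl
  exact ⟨c, m₀, hm₀ne, hDm₀⟩

end LeveltAux

namespace LeveltAux

variable {k : Type*} [Field k]

theorem irreducible_case [CharZero k] [IsAlgClosed k]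
    {M : Type*} [AddCommGroup M] [Module (LaurentSeries k) M]
    (D : M → M) (hconn : IsConnection k M D)
    (V : AddSubgroup M) (hlat : IsLattice k M V)
    (hstab : ∀ x ∈ V, D x ∈ V)
    (hnt : Nontrivial M)
    (hirr : ∀ S : Submodule (LaurentSeries k) M, (∀ x ∈ S, D x ∈ S) → S = ⊥ ∨ S = ⊤) :
    ∃ (c : k) (ψ : M ≃ₗ[LaurentSeries k] LaurentSeries k),
      ∀ m : M, ψ (D m) = tdt (ψ m) + HahnSeries.C c * ψ m := by
  obtain ⟨c, m, hmne, hDm⟩ := exists_eigenvector D hconn V hlat hstab hnt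
  set N : Submodule (LaurentSeries k) M := Submodule.span (LaurentSeries k) {m} with hN
  have hstabN : ∀ x ∈ N, D x ∈ N := by
    intro x hx
    obtain ⟨f, rfl⟩ := Submodule.mem_span_singleton.mp hx
    rw [hconn.2, hDm, smul_smul]
    exact N.add_mem (N.smul_mem _ (Submodule.mem_span_singleton_self m))
      (N.smul_mem _ (Submodule.mem_span_singleton_self m))
  have hNtop : N = ⊤ := by
    refine (hirr N hstabN).resolve_left ?_
    rw [hN, Submodule.span_singleton_eq_bot]
    exact hmne
  set Φ : LaurentSeries k →ₗ[LaurentSeries k] M :=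
    LinearMap.toSpanSingleton (LaurentSeries k) M m with hΦ
  have hΦapp : ∀ f : LaurentSeries k, Φ f = f • m := fun f => rfl
  have hbij : Function.Bijective Φ := by
    constructor
    · intro a b hab
      by_contra hne
      have hsub : (a - b) • m = 0 := by
        rw [sub_smul, ← hΦapp, ← hΦapp, hab, sub_self]
      have : m = 0 := by
        have h2 := congrArg (fun y => (a - b)⁻¹ • y) hsub
        simp only [smul_smul, inv_mul_cancel₀ (sub_ne_zero.mpr hne), one_smul, smul_zero] at h2
        exact h2
      exact hmne this
    · intro x
      have hx : x ∈ N := by rw [hNtop]; trivial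
      obtain ⟨a, ha⟩ := Submodule.mem_span_singleton.mp hx
      exact ⟨a, ha⟩
  set ψ : M ≃ₗ[LaurentSeries k] LaurentSeries k :=
    (LinearEquiv.ofBijective Φ hbij).symm with hψ
  have hψsymm : ∀ f : LaurentSeries k, ψ.symm f = f • m := fun f => rfl
  have hback : ∀ f : LaurentSeries k, ψ (f • m) = f := by
    intro f
    rw [← hψsymm, LinearEquiv.apply_symm_apply]
  have hxrep : ∀ x : M, x = ψ x • m := by
    intro x
    conv_lhs => rw [← ψ.symm_apply_apply x]
    rfl
  refine ⟨c, ψ, fun x => ?_⟩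
  have hDx : D x = (tdt (ψ x) + HahnSeries.C c * ψ x) • m := by
    conv_lhs => rw [hxrep x]
    rw [hconn.2, hDm, smul_smul, add_smul]
    congr 2
    rw [mul_comm]
  rw [hDx, hback]

end LeveltAux

namespace LeveltAux

universe u

variable {k : Type*} [Field k]

theorem lattice_finite {M : Type*} [AddCommGroup M] [Module (LaurentSeries k) M]
    (V : AddSubgroup M) (hlat : IsLattice k M V) : Module.Finite (LaurentSeries k) M := by
  obtain ⟨hsmul, ⟨S, hSV, hSgen⟩, hden⟩ := hlat
  refine ⟨⟨S, ?_⟩⟩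
  rw [eq_top_iff]
  intro x _
  obtain ⟨n, hn⟩ := hden x
  obtain ⟨cf, hcf⟩ := hSgen _ hn
  have hx : x = (HahnSeries.single (-(n:ℤ)) 1 : LaurentSeries k) •
      ((HahnSeries.single (n:ℤ) 1 : LaurentSeries k) • x) := by
    rw [smul_smul, HahnSeries.single_mul_single, neg_add_cancel, one_mul,
      HahnSeries.single_zero_one, one_smul]
  rw [hx, hcf, Finset.smul_sum]
  exact Submodule.sum_mem _ fun y hy => by
    rw [smul_smul]
    exact Submodule.smul_mem _ _ (Submodule.subset_span hy)

theorem filtration_trivial {M : Type*} [AddCommGroup M] [Module (LaurentSeries k) M]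
    (h : Subsingleton M) (D : M → M) :
    ∃ (n : ℕ) (b : Module.Basis (Fin n) (LaurentSeries k) M) (c : Fin n → k),
      ∀ j : Fin n, D (b j) - (HahnSeries.C (c j) : LaurentSeries k) • b j ∈
        Submodule.span (LaurentSeries k) (b '' {i : Fin n | i < j}) :=
  ⟨0, Module.Basis.empty M, fun _ => 0, fun j => j.elim0⟩

set_option maxHeartbeats 1000000 in
theorem filtration_aux [CharZero k] [IsAlgClosed k] : ∀ (d : ℕ) (M : Type u)
    [AddCommGroup M] [Module (LaurentSeries k) M],
    ∀ (D : M → M), IsConnection k M D → ∀ (V : AddSubgroup M), IsLattice k M V →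
    (∀ x ∈ V, D x ∈ V) →
    Module.finrank (LaurentSeries k) M ≤ d →
    ∃ (n : ℕ) (b : Module.Basis (Fin n) (LaurentSeries k) M) (c : Fin n → k),
      ∀ j : Fin n, D (b j) - (HahnSeries.C (c j) : LaurentSeries k) • b j ∈
        Submodule.span (LaurentSeries k) (b '' {i : Fin n | i < j}) := by
  intro d
  induction d with
  | zero =>
    intro M _ _ D hconn V hlat hstab hrank
    haveI : Module.Finite (LaurentSeries k) M := lattice_finite V hlat
    have hsub : Subsingleton M := by
      have h0 : Module.finrank (LaurentSeries k) M = 0 := Nat.le_zero.mp hrank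
      exact Module.finrank_zero_iff.mp h0
    exact filtration_trivial hsub D
  | succ d ih =>
    intro M _ _ D hconn V hlat hstab hrank
    classical
    haveI : Module.Finite (LaurentSeries k) M := lattice_finite V hlat
    by_cases hM : Nontrivial M
    · obtain ⟨c₀, m, hmne, hDm⟩ := exists_eigenvector D hconn V hlat hstab hM
      set N : Submodule (LaurentSeries k) M := Submodule.span (LaurentSeries k) {m} with hN
      have hmN : m ∈ N := Submodule.mem_span_singleton_self m
      have hstabN : ∀ x ∈ N, D x ∈ N := by
        intro x hx
        obtain ⟨f, rfl⟩ := Submodule.mem_span_singleton.mp hx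
        rw [hconn.2, hDm, smul_smul]
        exact N.add_mem (N.smul_mem _ hmN) (N.smul_mem _ hmN)
      set π : M →ₗ[LaurentSeries k] M ⧸ N := N.mkQ with hπ
      have hπsurj : Function.Surjective π := Submodule.mkQ_surjective N
      set Dq : M ⧸ N → M ⧸ N := fun q => π (D (Quotient.out q)) with hDq
      have hDqmk : ∀ x : M, Dq (π x) = π (D x) := by
        intro x
        have h1 : (Submodule.Quotient.mk (Quotient.out (π x)) : M ⧸ N) = π x :=
          Quotient.out_eq _
        have h2 : Quotient.out (π x) - x ∈ N := by
          rw [← Submodule.Quotient.eq N]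
          rw [h1, hπ, Submodule.mkQ_apply]
        have h3 : D (Quotient.out (π x)) - D x ∈ N := by
          have h4 : D (Quotient.out (π x)) = D (Quotient.out (π x) - x) + D x := by
            rw [← hconn.1, sub_add_cancel]
          rw [h4, add_sub_cancel_right]
          exact hstabN _ h2
        show π (D (Quotient.out (π x))) = π (D x)
        simp only [hπ, Submodule.mkQ_apply]
        rw [Submodule.Quotient.eq]
        exact h3
      have hconnq : IsConnection k (M ⧸ N) Dq := by
        constructor
        · intro q1 q2
          obtain ⟨x, rfl⟩ := hπsurj q1
          obtain ⟨y, rfl⟩ := hπsurj q2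
          rw [← map_add, hDqmk, hDqmk, hDqmk, hconn.1, map_add]
        · intro f q
          obtain ⟨x, rfl⟩ := hπsurj q
          rw [← map_smul, hDqmk, hDqmk, hconn.2, map_add, map_smul, map_smul]
      set Vq : AddSubgroup (M ⧸ N) := AddSubgroup.map π.toAddMonoidHom V with hVq
      have hmemVq : ∀ q : M ⧸ N, q ∈ Vq ↔ ∃ x ∈ V, π x = q := by
        intro q
        constructor
        · rintro ⟨x, hx, rfl⟩; exact ⟨x, hx, rfl⟩
        · rintro ⟨x, hx, rfl⟩; exact ⟨x, hx, rfl⟩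
      obtain ⟨hsmul, ⟨S, hSV, hSgen⟩, hden⟩ := hlat
      have hlatq : IsLattice k (M ⧸ N) Vq := by
        refine ⟨?_, ⟨S.image (fun y => π y), ?_, ?_⟩, ?_⟩
        · intro p q hq
          obtain ⟨x, hx, rfl⟩ := (hmemVq q).mp hq
          rw [← map_smul]
          exact (hmemVq _).mpr ⟨_, hsmul p x hx, rfl⟩
        · intro q hq
          simp only [Finset.coe_image, Set.mem_image] at hq
          obtain ⟨y, hy, rfl⟩ := hq
          exact (hmemVq _).mpr ⟨y, hSV hy, rfl⟩
        · intro q hq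
          obtain ⟨x, hx, rfl⟩ := (hmemVq q).mp hq
          obtain ⟨cf, hcf⟩ := hSgen x hx
          refine ⟨fun q' => ∑ y ∈ S.filter (fun y => π y = q'), cf y, ?_⟩
          have h1 : π x = ∑ y ∈ S, (HahnSeries.ofPowerSeries ℤ k (cf y)) • π y := by
            rw [hcf, map_sum]
            exact Finset.sum_congr rfl fun y _ => map_smul π _ _
          rw [h1]
          rw [← Finset.sum_fiberwise_of_maps_to (g := fun y => π y)
            (t := S.image (fun y => π y)) (fun y hy => Finset.mem_image_of_mem _ hy)]
          refine Finset.sum_congr rfl fun q' _ => ?_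
          rw [map_sum, Finset.sum_smul]
          refine Finset.sum_congr rfl fun y hy => ?_
          rw [(Finset.mem_filter.mp hy).2]
        · intro q
          obtain ⟨x, rfl⟩ := hπsurj q
          obtain ⟨n, hn⟩ := hden x
          exact ⟨n, (hmemVq _).mpr ⟨_, hn, map_smul π _ _⟩⟩
      have hstabq : ∀ q ∈ Vq, Dq q ∈ Vq := by
        intro q hq
        obtain ⟨x, hx, rfl⟩ := (hmemVq q).mp hq
        rw [hDqmk]
        exact (hmemVq _).mpr ⟨_, hstab x hx, rfl⟩
      have hrkq : Module.finrank (LaurentSeries k) (M ⧸ N) ≤ d := by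
        have h1 := Submodule.finrank_quotient_add_finrank N
        have h2 : Module.finrank (LaurentSeries k) N = 1 := finrank_span_singleton hmne
        omega
      obtain ⟨n, bq, cq, hbq⟩ := ih (M ⧸ N) Dq hconnq Vq hlatq hstabq hrkq
      -- lift the quotient basis
      set bl : Fin n → M := fun j => Classical.choose (hπsurj (bq j)) with hbl
      have hblq : ∀ j, π (bl j) = bq j := fun j => Classical.choose_spec (hπsurj (bq j))
      set b' : Fin (n+1) → M := Fin.cases m bl with hb'
      have hb'0 : b' 0 = m := rfl
      have hb's : ∀ j : Fin n, b' j.succ = bl j := fun j => rfl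
      have hπb'0 : π (b' 0) = 0 := by
        rw [hb'0, hπ, Submodule.mkQ_apply, Submodule.Quotient.mk_eq_zero]
        exact hmN
      -- linear independence
      have hli : LinearIndependent (LaurentSeries k) b' := by
        rw [Fintype.linearIndependent_iff]
        intro g hg
        have hq0 : ∑ j : Fin n, g j.succ • bq j = 0 := by
          have h1 := congrArg π hg
          rw [map_sum, map_zero, Fin.sum_univ_succ] at h1
          simp only [map_smul] at h1
          rw [hπb'0, smul_zero, zero_add] at h1
          rw [← h1]
          exact Finset.sum_congr rfl fun j _ => by rw [hb's, hblq]
        have hgs : ∀ j : Fin n, g j.succ = 0 :=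
          Fintype.linearIndependent_iff.mp bq.linearIndependent _ hq0
        have hg0 : g 0 = 0 := by
          rw [Fin.sum_univ_succ] at hg
          have h2 : ∑ j : Fin n, g j.succ • b' j.succ = 0 := by
            exact Finset.sum_eq_zero fun j _ => by rw [hgs j, zero_smul]
          rw [h2, add_zero, hb'0] at hg
          by_contra hne
          apply hmne
          have h3 := congrArg (fun y => (g 0)⁻¹ • y) hg
          simp only [smul_smul, inv_mul_cancel₀ hne, one_smul, smul_zero] at h3
          exact h3
        intro i
        refine Fin.cases hg0 hgs i
      -- spanning
      have hsp : ⊤ ≤ Submodule.span (LaurentSeries k) (Set.range b') := by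
        intro x _
        have h1 : π x = π (∑ j : Fin n, (bq.repr (π x)) j • bl j) := by
          rw [map_sum]
          conv_lhs => rw [← bq.sum_repr (π x)]
          exact Finset.sum_congr rfl fun j _ => by rw [map_smul, hblq]
        have h2 : x - ∑ j : Fin n, (bq.repr (π x)) j • bl j ∈ N := by
          rw [← Submodule.Quotient.eq N]
          exact h1
        obtain ⟨a, ha⟩ := Submodule.mem_span_singleton.mp h2
        have h3 : x = a • m + ∑ j : Fin n, (bq.repr (π x)) j • bl j := by
          rw [ha, sub_add_cancel]
        rw [h3]
        refine Submodule.add_mem _ ?_ ?_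
        · exact Submodule.smul_mem _ _ (Submodule.subset_span ⟨0, hb'0⟩)
        · exact Submodule.sum_mem _ fun j _ => Submodule.smul_mem _ _
            (Submodule.subset_span ⟨j.succ, hb's j⟩)
      set bb : Module.Basis (Fin (n+1)) (LaurentSeries k) M := Module.Basis.mk hli hsp with hbb
      have hbbapp : ∀ j, bb j = b' j := fun j => by rw [hbb, Module.Basis.coe_mk]
      refine ⟨n+1, bb, Fin.cases c₀ cq, ?_⟩
      intro j
      refine Fin.cases ?_ ?_ j
      · rw [hbbapp, hb'0]
        simp only [Fin.cases_zero]
        rw [hDm, sub_self]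
        exact Submodule.zero_mem _
      · intro i
        rw [hbbapp]
        simp only [Fin.cases_succ]
        rw [hb's]
        set y : M := D (bl i) - (HahnSeries.C (cq i) : LaurentSeries k) • bl i with hy
        have h1 : π y = Dq (bq i) - (HahnSeries.C (cq i) : LaurentSeries k) • bq i := by
          rw [hy, map_sub, map_smul, hblq, ← hblq i, hDqmk, hblq]
        have h2 : π y ∈ Submodule.span (LaurentSeries k) (bq '' {i' : Fin n | i' < i}) := by
          rw [h1]; exact hbq i
        have himg : bq '' {i' : Fin n | i' < i} = π '' (bl '' {i' : Fin n | i' < i}) := by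
          rw [Set.image_image]
          exact Set.image_congr fun i' _ => (hblq i').symm
        rw [himg, Submodule.span_image] at h2
        obtain ⟨z, hz, hzy⟩ := h2
        have h3 : y - z ∈ N := by
          rw [← Submodule.Quotient.eq N]
          exact hzy.symm
        obtain ⟨a, ha⟩ := Submodule.mem_span_singleton.mp h3
        have h4 : y = a • m + z := by rw [ha, sub_add_cancel]
        rw [h4]
        refine Submodule.add_mem _ ?_ ?_
        · refine Submodule.smul_mem _ _ (Submodule.subset_span ?_)
          exact ⟨0, by exact Fin.succ_pos i, by rw [hbbapp, hb'0]⟩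
        · refine Submodule.span_le.mpr ?_ hz
          intro u hu
          obtain ⟨i', hi', rfl⟩ := hu
          refine Submodule.subset_span ⟨i'.succ, ?_, ?_⟩
          · exact Fin.succ_lt_succ_iff.mpr hi'
          · rw [hbbapp, hb's]
    · have hsub : Subsingleton M := not_nontrivial_iff_subsingleton.mp hM
      exact filtration_trivial hsub D

end LeveltAux

/-- Every irreducible regular formal connection on `k((t))` is isomorphic to a one-dimensional
connection `[c]` for some `c ∈ k`; consequently every regular formal connection is a successive
extension of connections `[c]` — i.e. it admits a basis `b₀, …, b_{n-1}` and scalars `c_j` with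
`D(b_j) ≡ c_j • b_j` modulo the span of the previous basis vectors, which expresses `M` as a
successive extension of the one-dimensional connections `[c_j]`. -/
theorem irreducible_regular_connection_is_rank_one
    {k : Type*} [Field k] [CharZero k] [IsAlgClosed k]
    (M : Type*) [AddCommGroup M] [Module (LaurentSeries k) M]
    [Module.Finite (LaurentSeries k) M]
    (D : M → M) (hconn : IsConnection k M D) (hreg : IsRegularConnection k M D) :
    ((Nontrivial M ∧
        ∀ S : Submodule (LaurentSeries k) M, (∀ x ∈ S, D x ∈ S) → S = ⊥ ∨ S = ⊤) →
      ∃ (c : k) (ψ : M ≃ₗ[LaurentSeries k] LaurentSeries k),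
        ∀ m : M, ψ (D m) = tdt (ψ m) + HahnSeries.C c * ψ m) ∧
    (∃ (n : ℕ) (b : Module.Basis (Fin n) (LaurentSeries k) M) (c : Fin n → k),
      ∀ j : Fin n, D (b j) - (HahnSeries.C (c j) : LaurentSeries k) • b j ∈
        Submodule.span (LaurentSeries k) (b '' {i : Fin n | i < j})) := by
  obtain ⟨V, hlat, -, -, hstab, -⟩ := hreg
  constructor
  · rintro ⟨hnt, hirr⟩
    exact LeveltAux.irreducible_case D hconn V hlat hstab hnt hirr
  · exact LeveltAux.filtration_aux (Module.finrank (LaurentSeries k) M) M D hconn V hlat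
      hstab le_rfl
end

section
/- Let r, s ≥ 1, let a(T) = Σ_{i≥0} a_i T^i ∈ k[[T]] with a_0 ≠ 0, and let T = Σ_{i≥0} λ_i Z'^{i+1} with λ_0^{r+s} = a_0 satisfy a(T) = (T/Z')^{r+s}. Define b(Z') = (T/Z')^r = Σ_{i≥0} b_i Z'^i. Then b_s = (r/(r+s))·a_s. -/
open PowerSeries

/-- Composition `a(T)` of a power series `a` with a power series `T` of positive order. -/
noncomputable def compPS {k : Type*} [CommRing k] (a T : PowerSeries k) : PowerSeries k :=
  PowerSeries.mk fun n => ∑ m ∈ Finset.range (n + 1),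
    (PowerSeries.coeff m a) * (PowerSeries.coeff n (T ^ m))

/-- The power series `T(Z') = ∑_{i≥0} λ_i Z'^{i+1}`. -/
noncomputable def seriesOf {k : Type*} [CommRing k] (lam : ℕ → k) : PowerSeries k :=
  PowerSeries.mk fun n => if n = 0 then 0 else lam (n - 1)

lemma seriesOf_eq_X_mul {k : Type*} [CommRing k] (lam : ℕ → k) :
    seriesOf lam = PowerSeries.X * PowerSeries.mk lam := by
  ext n
  cases n with
  | zero => simp [seriesOf]
  | succ n => simp [seriesOf, PowerSeries.coeff_succ_X_mul]

lemma ps_deriv_inv {k : Type*} [Field k] (U : PowerSeries k)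
    (hU : PowerSeries.constantCoeff U ≠ 0) :
    d⁄dX k (U⁻¹) = -(U⁻¹ * U⁻¹ * d⁄dX k U) := by
  have h1 : U * U⁻¹ = 1 := PowerSeries.mul_inv_cancel U hU
  have h2 := congrArg (d⁄dX k) h1
  rw [Derivation.leibniz, Derivation.map_one_eq_zero, smul_eq_mul, smul_eq_mul] at h2
  have h3 := congrArg (U⁻¹ * ·) h2
  simp only [mul_add, mul_zero] at h3
  have h4 : U⁻¹ * (U * d⁄dX k (U⁻¹)) = d⁄dX k (U⁻¹) := by
    rw [← mul_assoc, mul_comm (U⁻¹) U, h1, one_mul]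
  rw [h4] at h3
  linear_combination h3

lemma deriv_inv_pow {k : Type*} [Field k] (U : PowerSeries k)
    (hU : PowerSeries.constantCoeff U ≠ 0) (n : ℕ) :
    d⁄dX k ((U⁻¹) ^ (n + 1)) = -((n + 1 : k) • ((U⁻¹) ^ (n + 2) * d⁄dX k U)) := by
  rw [Derivation.leibniz_pow, smul_eq_mul, ps_deriv_inv U hU]
  simp only [nsmul_eq_mul, PowerSeries.smul_eq_C_mul, map_add, map_one, map_natCast]
  push_cast
  ring

lemma residue_lemma {k : Type*} [Field k] [CharZero k] (U : PowerSeries k)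
    (hU : PowerSeries.constantCoeff U ≠ 0) (m : ℕ) :
    PowerSeries.coeff m ((U⁻¹) ^ (m + 1) * (U + PowerSeries.X * d⁄dX k U)) =
      if m = 0 then 1 else 0 := by
  have h1 : U * U⁻¹ = 1 := PowerSeries.mul_inv_cancel U hU
  have key : (U⁻¹) ^ (m + 1) * (U + PowerSeries.X * d⁄dX k U)
      = (U⁻¹) ^ m + PowerSeries.X * ((U⁻¹) ^ (m + 1) * d⁄dX k U) := by
    have h2 : (U⁻¹) ^ (m + 1) * (U + PowerSeries.X * d⁄dX k U)
        = (U * U⁻¹) * (U⁻¹) ^ m + PowerSeries.X * ((U⁻¹) ^ (m + 1) * d⁄dX k U) := by ring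
    rw [h2, h1, one_mul]
  rw [key]
  cases m with
  | zero =>
      simp
  | succ n =>
      rw [if_neg (Nat.succ_ne_zero n), map_add, PowerSeries.coeff_succ_X_mul]
      have hd := PowerSeries.coeff_derivative ((U⁻¹) ^ (n + 1)) n
      rw [deriv_inv_pow U hU n, map_neg, map_smul, smul_eq_mul] at hd
      have hne : ((n : k) + 1) ≠ 0 := Nat.cast_add_one_ne_zero n
      have h3 : PowerSeries.coeff (n + 1) ((U⁻¹) ^ (n + 1))
          = -(PowerSeries.coeff n ((U⁻¹) ^ (n + 2) * d⁄dX k U)) := by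
        apply mul_right_cancel₀ hne
        linear_combination -hd
      rw [h3]
      ring

lemma compPS_sub_partial {k : Type*} [Field k] (a U : PowerSeries k) (s : ℕ) :
    (PowerSeries.X : PowerSeries k) ^ (s + 1) ∣
      (compPS a (PowerSeries.X * U)
        - ∑ i ∈ Finset.range (s + 1),
            PowerSeries.C (PowerSeries.coeff i a) * (PowerSeries.X * U) ^ i) := by
  rw [PowerSeries.X_pow_dvd_iff]
  intro m hm
  rw [map_sub, map_sum]
  have hc : PowerSeries.coeff m (compPS a (PowerSeries.X * U))
      = ∑ j ∈ Finset.range (m + 1),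
          PowerSeries.coeff j a * PowerSeries.coeff m ((PowerSeries.X * U) ^ j) := by
    simp [compPS]
  rw [hc, sub_eq_zero]
  simp only [PowerSeries.coeff_C_mul]
  refine Finset.sum_subset (Finset.range_subset_range.2 (by omega)) (fun i _ hi => ?_)
  have him : m < i := by
    simp only [Finset.mem_range, not_lt] at hi; omega
  rw [mul_pow, PowerSeries.coeff_X_pow_mul', if_neg (by omega), mul_zero]

/-- Let `a(T) = ∑ a_i T^i` with `a_0 ≠ 0`, let `T = ∑ λ_i Z'^{i+1}` with `λ_0^{r+s} = a_0`
satisfy `a(T) = (T/Z')^{r+s}`, and define `b(Z') = (T/Z')^r`, i.e. `b·Z'^r = T^r`.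
Then `b_s = (r/(r+s))·a_s`. -/
theorem coeff_s_of_fourier_zero_infty
    {k : Type*} [Field k] [CharZero k] [IsAlgClosed k] (r s : ℕ) (hr : 1 ≤ r) (hs : 1 ≤ s)
    (a : PowerSeries k) (ha : PowerSeries.coeff 0 a ≠ 0) (lam : ℕ → k)
    (hlam : lam 0 ^ (r + s) = PowerSeries.coeff 0 a)
    (heq : compPS a (seriesOf lam) * PowerSeries.X ^ (r + s) = (seriesOf lam) ^ (r + s))
    (b : PowerSeries k) (hb : b * PowerSeries.X ^ r = (seriesOf lam) ^ r) :
    PowerSeries.coeff s b = ((r : k) / ((r : k) + (s : k))) * PowerSeries.coeff s a := by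
  classical
  obtain ⟨r', rfl⟩ : ∃ t, r = t + 1 := ⟨r - 1, by omega⟩
  set r : ℕ := r' + 1 with hrdef
  set U : PowerSeries k := PowerSeries.mk lam with hUdef
  have hXU : seriesOf lam = PowerSeries.X * U := seriesOf_eq_X_mul lam
  have hlam0 : lam 0 ≠ 0 := by
    intro h
    apply ha
    rw [← hlam, h, zero_pow (by omega)]
  have hU0 : PowerSeries.constantCoeff U ≠ 0 := by
    simpa [hUdef] using hlam0
  have hUW : U * U⁻¹ = 1 := PowerSeries.mul_inv_cancel U hU0
  set W : PowerSeries k := U⁻¹ with hWdef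
  have hXne : ∀ n : ℕ, (PowerSeries.X : PowerSeries k) ^ n ≠ 0 :=
    fun n => pow_ne_zero _ PowerSeries.X_ne_zero
  -- b = U ^ r
  have hbU : b = U ^ r := by
    apply mul_right_cancel₀ (hXne r)
    rw [hb, hXU, mul_pow]; ring
  -- compPS a (X * U) = U ^ (r + s)
  have hA : compPS a (PowerSeries.X * U) = U ^ (r + s) := by
    apply mul_right_cancel₀ (hXne (r + s))
    rw [← hXU, heq, hXU, mul_pow]; ring
  set DU : PowerSeries k := d⁄dX k U with hDUdef
  set DT : PowerSeries k := U + PowerSeries.X * DU with hDTdef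
  have hDT : d⁄dX k (PowerSeries.X * U) = DT := by
    rw [Derivation.leibniz, PowerSeries.derivative_X, smul_eq_mul, smul_eq_mul, hDTdef]
    ring
  -- main computation
  have hmain : ((r + s : ℕ) : k) * PowerSeries.coeff s (U ^ r)
      = (r : k) * PowerSeries.coeff s a := by
    -- step 1 : (r+s) * coeff_s (U^r) = coeff_{r'+s} (D ((X*U)^r))
    have h1 : PowerSeries.coeff (r' + s) (d⁄dX k ((PowerSeries.X * U) ^ r))
        = PowerSeries.coeff s (U ^ r) * ((r + s : ℕ) : k) := by
      rw [PowerSeries.coeff_derivative]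
      have e1 : r' + s + 1 = s + r := by omega
      rw [e1, mul_pow, PowerSeries.coeff_X_pow_mul]
      push_cast
      rw [hrdef]; push_cast
      ring
    -- step 2 : D ((X*U)^r) = r • ((X*U)^r' * DT)
    have h2 : d⁄dX k ((PowerSeries.X * U) ^ r)
        = (r : ℕ) • ((PowerSeries.X * U) ^ r' * DT) := by
      rw [Derivation.leibniz_pow, hDT, smul_eq_mul]
      congr 2
    -- step 3 : (X*U)^r' * DT = X^r' * ((U^(r+s) * W^(s+1)) * DT)
    have h3 : (PowerSeries.X * U) ^ r' * DT
        = PowerSeries.X ^ r' * (U ^ (r + s) * W ^ (s + 1) * DT) := by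
      have hpow : U ^ (r + s) * W ^ (s + 1) = U ^ r' := by
        have e2 : U ^ (r + s) = U ^ r' * U ^ (s + 1) := by
          rw [← pow_add]; congr 1; omega
        rw [e2, mul_assoc, ← mul_pow, hUW, one_pow, mul_one]
      rw [hpow, mul_pow]
      ring
    -- step 4 : pass to coefficient s
    have h4 : PowerSeries.coeff (r' + s)
          (PowerSeries.X ^ r' * (U ^ (r + s) * W ^ (s + 1) * DT))
        = PowerSeries.coeff s (U ^ (r + s) * W ^ (s + 1) * DT) := by
      have e3 : r' + s = s + r' := by omega
      rw [e3, PowerSeries.coeff_X_pow_mul]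
    -- step 5 : replace U^(r+s) by compPS and split off the partial sum
    set P : PowerSeries k := ∑ i ∈ Finset.range (s + 1),
        PowerSeries.C (PowerSeries.coeff i a) * (PowerSeries.X * U) ^ i with hPdef
    obtain ⟨R₁, hR⟩ := compPS_sub_partial a U s
    have h5 : U ^ (r + s) * W ^ (s + 1) * DT
        = P * (W ^ (s + 1) * DT)
          + PowerSeries.X ^ (s + 1) * (R₁ * (W ^ (s + 1) * DT)) := by
      rw [← hA]
      have : compPS a (PowerSeries.X * U) = P + PowerSeries.X ^ (s + 1) * R₁ := by
        rw [← hR]; ring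
      rw [this]; ring
    have h6 : PowerSeries.coeff s
        (PowerSeries.X ^ (s + 1) * (R₁ * (W ^ (s + 1) * DT))) = 0 := by
      rw [PowerSeries.coeff_X_pow_mul', if_neg (by omega)]
    -- step 6 : coefficient of the partial sum
    have h7 : PowerSeries.coeff s (P * (W ^ (s + 1) * DT))
        = PowerSeries.coeff s a := by
      rw [hPdef, Finset.sum_mul, map_sum]
      have hterm : ∀ i ∈ Finset.range (s + 1),
          PowerSeries.coeff s
            (PowerSeries.C (PowerSeries.coeff i a) * (PowerSeries.X * U) ^ i
              * (W ^ (s + 1) * DT))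
          = PowerSeries.coeff i a * (if i = s then 1 else 0) := by
        intro i hi
        have his : i ≤ s := by simpa [Nat.lt_succ_iff] using hi
        rw [mul_assoc, PowerSeries.coeff_C_mul]
        congr 1
        have e4 : (PowerSeries.X * U) ^ i * (W ^ (s + 1) * DT)
            = PowerSeries.X ^ i * (W ^ (s - i + 1) * DT) := by
          have e5 : W ^ (s + 1) = W ^ i * W ^ (s - i + 1) := by
            rw [← pow_add]; congr 1; omega
          have e6 : U ^ i * W ^ i = 1 := by rw [← mul_pow, hUW, one_pow]
          calc (PowerSeries.X * U) ^ i * (W ^ (s + 1) * DT)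
              = PowerSeries.X ^ i * ((U ^ i * W ^ i) * (W ^ (s - i + 1) * DT)) := by
                rw [mul_pow, e5]; ring
            _ = PowerSeries.X ^ i * (W ^ (s - i + 1) * DT) := by rw [e6, one_mul]
        rw [e4, PowerSeries.coeff_X_pow_mul', if_pos his]
        rw [hWdef, hDTdef, hDUdef]
        rw [residue_lemma U hU0 (s - i)]
        by_cases h : i = s
        · subst h; simp
        · rw [if_neg (by omega), if_neg h]
      rw [Finset.sum_congr rfl hterm]
      simp only [mul_ite, mul_one, mul_zero]
      rw [Finset.sum_ite_eq' (Finset.range (s + 1)) s (fun i => PowerSeries.coeff i a)]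
      rw [if_pos (by simp)]
    -- assemble
    have hcoeff := congrArg (PowerSeries.coeff (r' + s)) h2
    rw [h3, map_nsmul, h4, nsmul_eq_mul] at hcoeff
    rw [h5, map_add, h6, add_zero, h7] at hcoeff
    rw [h1] at hcoeff
    push_cast at hcoeff ⊢
    linear_combination hcoeff
  -- conclude
  have hne : ((r : k) + (s : k)) ≠ 0 := by
    exact_mod_cast Nat.cast_ne_zero.mpr (show r + s ≠ 0 by omega)
  rw [hbU, div_mul_eq_mul_div, eq_div_iff hne]
  push_cast at hmain ⊢
  linear_combination hmain
end

section
/- (Hensel's lemma for operators on power series modules) Let E be a finite-dimensional k-vector space and D a k[[t]]-linear endomorphism of E ⊗_k k[[t]], with D(v) = Σ_{i≥0} t^i D_i(v) for v ∈ E, D_i ∈ End_k(E). If the characteristic polynomial of D_0 has a simple root α_0 ∈ k, then there exist α ∈ k[[t]] with constant term α_0 and a nonzero u ∈ E ⊗_k k[[t]] with (D − α)(u) = 0; moreover α is uniquely determined by α_0. -/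
/-- An element of `E ⊗_k k[[t]]` is encoded as its sequence of coefficients `u : ℕ → E`, and
the `k[[t]]`-linear operator `D` by the sequence of its `k`-linear components
`D i : E →ₗ[k] E` (so `D(∑ tⁱ uᵢ) = ∑ tⁿ (∑_{i+j=n} Dᵢ(uⱼ))`).  `HenselSol D α u` says that
`(D − α)(u) = 0` in `E ⊗_k k[[t]]`, where `α = ∑ tⁱ αᵢ ∈ k[[t]]`. -/
def HenselSol {k : Type*} [Field k] {E : Type*} [AddCommGroup E] [Module k E]
    (D : ℕ → E →ₗ[k] E) (α : ℕ → k) (u : ℕ → E) : Prop :=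
  ∀ n : ℕ, ∑ i ∈ Finset.range (n + 1), (D i (u (n - i)) - α i • u (n - i)) = 0


open Polynomial Module FiniteDimensional LinearMap

section Charpoly

variable {R : Type*} [CommRing R]

lemma Matrix.charpoly_sub_smul_one' {n : Type*} [DecidableEq n] [Fintype n]
    (M : Matrix n n R) (c : R) :
    (M - c • 1).charpoly = M.charpoly.comp (X + C c) := by
  have hcomp : M.charpoly.comp (X + C c)
      = Polynomial.eval₂RingHom Polynomial.C (X + C c) M.charpoly := rfl
  rw [hcomp, Matrix.charpoly, Matrix.charpoly, RingHom.map_det]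
  congr 1
  ext i j
  rw [RingHom.mapMatrix_apply]
  by_cases h : i = j
  · subst h
    simp [Matrix.charmatrix_apply_eq, Matrix.map_apply, Matrix.sub_apply, Matrix.smul_apply,
      Matrix.one_apply, map_sub]
    ring
  · simp [Matrix.charmatrix_apply_ne _ _ _ h, Matrix.map_apply, Matrix.sub_apply,
      Matrix.smul_apply, Matrix.one_apply_ne h, map_sub]

end Charpoly

section CharpolyEnd

variable {k : Type*} [Field k] {E : Type*} [AddCommGroup E] [Module k E]
  [FiniteDimensional k E]

lemma charpoly_sub_smul_one (A : Module.End k E) (c : k) :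
    (A - c • (1 : Module.End k E)).charpoly = A.charpoly.comp (X + C c) := by
  classical
  let b := Module.Free.chooseBasis k E
  rw [← LinearMap.charpoly_toMatrix (A - c • (1 : Module.End k E)) b,
    ← LinearMap.charpoly_toMatrix A b]
  have : LinearMap.toMatrix b b (A - c • (1 : Module.End k E))
      = LinearMap.toMatrix b b A - c • 1 := by
    simp [map_sub, map_smul, LinearMap.toMatrix_one]
  rw [this, Matrix.charpoly_sub_smul_one']

end CharpolyEnd

section Spectral

variable {k : Type*} [Field k] {E : Type*} [AddCommGroup E] [Module k E]
  [FiniteDimensional k E]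

lemma simple_root_package (A : Module.End k E) (α₀ : k)
    (hsimple : (A.charpoly).rootMultiplicity α₀ = 1) :
    ∃ v : E, v ≠ 0 ∧ A v = α₀ • v ∧
      (∀ w : E, A w = α₀ • w → ∃ c : k, w = c • v) ∧
      (∀ (x : E) (c : k), A x - α₀ • x = c • v → c = 0) ∧
      (∀ e : E, ∃ (x : E) (μ : k), (A x - α₀ • x) + μ • v = e) := by
  classical
  set B : Module.End k E := A - α₀ • (1 : Module.End k E) with hB
  have hBapp : ∀ x : E, B x = A x - α₀ • x := by
    intro x; simp [hB]
  -- finrank of max generalized eigenspace is 1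
  have hfr : Module.finrank k (B.maxGenEigenspace 0) = 1 := by
    rw [LinearMap.finrank_maxGenEigenspace_zero_eq, hB, charpoly_sub_smul_one,
      ← Polynomial.rootMultiplicity_eq_natTrailingDegree, hsimple]
  -- pick a nonzero vector there
  obtain ⟨v, hv⟩ : ∃ v : E, v ∈ B.maxGenEigenspace 0 ∧ v ≠ 0 := by
    have : Nontrivial (B.maxGenEigenspace 0) := by
      apply Module.nontrivial_of_finrank_pos (R := k); omega
    obtain ⟨⟨v, hv⟩, hne⟩ := exists_ne (0 : B.maxGenEigenspace 0)
    exact ⟨v, hv, by simpa [Submodule.mk_eq_zero] using hne⟩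
  obtain ⟨hvmem, hv0⟩ := hv
  -- the max generalized eigenspace is the span of v
  have hspan : Submodule.span k {v} = B.maxGenEigenspace 0 := by
    apply Submodule.eq_of_le_of_finrank_le
    · rwa [Submodule.span_le, Set.singleton_subset_iff]
    · rw [hfr, finrank_span_singleton hv0]
  -- B v = 0
  have hBv : B v = 0 := by
    have hmem : B v ∈ B.maxGenEigenspace 0 := by
      rw [Module.End.mem_maxGenEigenspace] at hvmem ⊢
      obtain ⟨m, hm⟩ := hvmem
      refine ⟨m, ?_⟩
      have : ((B - (0:k) • 1) ^ m) (B v) = B (((B - (0:k) • 1) ^ m) v) := by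
        simp only [zero_smul, sub_zero]
        rw [← Module.End.mul_apply, ← Module.End.mul_apply, ← pow_succ, ← pow_succ']
      rw [this, hm, map_zero]
    rw [← hspan, Submodule.mem_span_singleton] at hmem
    obtain ⟨c, hc⟩ := hmem
    -- B v = c • v with B nilpotent on v
    have hnil : ∀ m : ℕ, (B ^ m) v = c ^ m • v := by
      intro m
      induction m with
      | zero => simp
      | succ m ih =>
        rw [pow_succ', Module.End.mul_apply, ih, map_smul, ← hc, smul_smul, pow_succ', mul_comm]
    rw [Module.End.mem_maxGenEigenspace] at hvmem
    obtain ⟨m, hm⟩ := hvmem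
    simp only [zero_smul, sub_zero] at hm
    rw [hnil m] at hm
    rcases smul_eq_zero.mp hm with h | h
    · have : c = 0 := pow_eq_zero_iff' |>.mp h |>.1
      rw [← hc, this, zero_smul]
    · exact absurd h hv0
  have hAv : A v = α₀ • v := by
    have h := hBapp v; rw [hBv] at h
    exact (sub_eq_zero.mp h.symm)
  -- kernel of B is contained in the span of v
  have hker : ∀ w : E, B w = 0 → ∃ c : k, w = c • v := by
    intro w hw
    have hmem : w ∈ B.maxGenEigenspace 0 := by
      rw [Module.End.mem_maxGenEigenspace]
      exact ⟨1, by simpa using hw⟩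
    rw [← hspan, Submodule.mem_span_singleton] at hmem
    obtain ⟨c, hc⟩ := hmem
    exact ⟨c, hc.symm⟩
  -- the complementary factor of the characteristic polynomial
  have hne : A.charpoly ≠ 0 := A.charpoly_monic.ne_zero
  set q : Polynomial k :=
    A.charpoly /ₘ ((X - C α₀) ^ (A.charpoly.rootMultiplicity α₀)) with hqdef
  have hfac : (X - C α₀) ^ (A.charpoly.rootMultiplicity α₀) * q = A.charpoly :=
    Polynomial.pow_mul_divByMonic_rootMultiplicity_eq _ _
  rw [hsimple, pow_one] at hfac
  have hq0 : Polynomial.eval α₀ q ≠ 0 :=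
    Polynomial.eval_divByMonic_pow_rootMultiplicity_ne_zero α₀ hne
  -- aeval A q kills the range of B
  have hBaeval : B = Polynomial.aeval A (X - C α₀) := by
    rw [map_sub, Polynomial.aeval_X, Polynomial.aeval_C, hB]
    congr 1
  have hqA : ∀ x : E, (Polynomial.aeval A q) (B x) = 0 := by
    intro x
    have hmul : (Polynomial.aeval A q) * (Polynomial.aeval A (X - C α₀))
        = Polynomial.aeval A (q * (X - C α₀)) := (map_mul _ _ _).symm
    have : q * (X - C α₀) = A.charpoly := by rw [mul_comm]; exact hfac
    calc (Polynomial.aeval A q) (B x)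
        = ((Polynomial.aeval A q) * (Polynomial.aeval A (X - C α₀))) x := by
          rw [Module.End.mul_apply, ← hBaeval]
      _ = 0 := by rw [hmul, this, LinearMap.aeval_self_charpoly]; rfl
  -- disjointness
  have hdisj : ∀ (x : E) (c : k), B x = c • v → c = 0 := by
    intro x c hxc
    have h1 : (Polynomial.aeval A q) (B x) = 0 := hqA x
    have hev : A.HasEigenvector α₀ v := ⟨Module.End.mem_eigenspace_iff.mpr hAv, hv0⟩
    have h2 : (Polynomial.aeval A q) (c • v) = (c * Polynomial.eval α₀ q) • v := by
      rw [map_smul, Module.End.aeval_apply_of_hasEigenvector hev, smul_smul]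
    rw [hxc, h2] at h1
    rcases smul_eq_zero.mp h1 with h | h
    · rcases mul_eq_zero.mp h with h' | h'
      · exact h'
      · exact absurd h' hq0
    · exact absurd h hv0
  -- surjectivity
  have hkerspan : LinearMap.ker B = Submodule.span k {v} := by
    apply le_antisymm
    · intro w hw
      rw [Submodule.mem_span_singleton]
      obtain ⟨c, hc⟩ := hker w (LinearMap.mem_ker.mp hw)
      exact ⟨c, hc.symm⟩
    · rw [Submodule.span_le, Set.singleton_subset_iff]
      exact LinearMap.mem_ker.mpr hBv
  have hinf : LinearMap.range B ⊓ LinearMap.ker B = ⊥ := by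
    rw [eq_bot_iff]
    rintro y ⟨hy1, hy2⟩
    obtain ⟨x, rfl⟩ := hy1
    obtain ⟨c, hc⟩ := hker (B x) (LinearMap.mem_ker.mp hy2)
    have := hdisj x c hc
    rw [this, zero_smul] at hc
    simp [hc]
  have hsup : LinearMap.range B ⊔ LinearMap.ker B = ⊤ := by
    apply Submodule.eq_top_of_finrank_eq
    have h1 := Submodule.finrank_sup_add_finrank_inf_eq (LinearMap.range B) (LinearMap.ker B)
    rw [hinf, finrank_bot, add_zero] at h1
    rw [h1, LinearMap.finrank_range_add_finrank_ker B]
  have hsurj : ∀ e : E, ∃ (x : E) (μ : k), (A x - α₀ • x) + μ • v = e := by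
    intro e
    have : e ∈ LinearMap.range B ⊔ LinearMap.ker B := by rw [hsup]; trivial
    obtain ⟨y, hy, z, hz, hyz⟩ := Submodule.mem_sup.mp this
    obtain ⟨x, rfl⟩ := hy
    rw [hkerspan, Submodule.mem_span_singleton] at hz
    obtain ⟨μ, rfl⟩ := hz
    exact ⟨x, μ, by rw [← hBapp]; exact hyz⟩
  refine ⟨v, hv0, hAv, ?_, ?_, hsurj⟩
  · intro w hw
    exact hker w (by rw [hBapp, hw, sub_self])
  · intro x c h
    exact hdisj x c (by rw [hBapp, h])

end Spectral

section Hensel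

variable {k : Type*} [Field k] {E : Type*} [AddCommGroup E] [Module k E]

/-- The `n`-th coefficient of `(D - α)(u)`. -/
def henselSum (D : ℕ → E →ₗ[k] E) (α : ℕ → k) (u : ℕ → E) (n : ℕ) : E :=
  ∑ i ∈ Finset.range (n + 1), (D i (u (n - i)) - α i • u (n - i))

lemma henselSum_sub (D : ℕ → E →ₗ[k] E) (α : ℕ → k) (u w : ℕ → E) (n : ℕ) :
    henselSum D α (u - w) n = henselSum D α u n - henselSum D α w n := by
  unfold henselSum
  rw [← Finset.sum_sub_distrib]
  apply Finset.sum_congr rfl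
  intro i _
  simp only [Pi.sub_apply, map_sub, smul_sub]
  abel

lemma henselSum_smul (D : ℕ → E →ₗ[k] E) (α : ℕ → k) (c : k) (u : ℕ → E) (n : ℕ) :
    henselSum D α (c • u) n = c • henselSum D α u n := by
  unfold henselSum
  rw [Finset.smul_sum]
  apply Finset.sum_congr rfl
  intro i _
  simp only [Pi.smul_apply, map_smul, smul_sub, smul_comm c (α i)]

/-- Multiplication by `t^m` on coefficient sequences. -/
def shiftFun (m : ℕ) (u : ℕ → E) : ℕ → E := fun n => if m ≤ n then u (n - m) else 0

lemma henselSum_shiftFun (D : ℕ → E →ₗ[k] E) (α : ℕ → k) (m : ℕ) (u : ℕ → E) (n : ℕ) :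
    henselSum D α (shiftFun m u) n = if m ≤ n then henselSum D α u (n - m) else 0 := by
  by_cases h : m ≤ n
  · rw [if_pos h]
    unfold henselSum
    rw [← Finset.sum_subset (Finset.range_subset_range.mpr (by omega : n - m + 1 ≤ n + 1))]
    · apply Finset.sum_congr rfl
      intro i hi
      rw [Finset.mem_range] at hi
      have h1 : shiftFun m u (n - i) = u (n - m - i) := by
        unfold shiftFun
        rw [if_pos (by omega)]
        congr 1
        omega
      rw [h1]
    · intro i hmem hi
      rw [Finset.mem_range] at hmem hi
      have h1 : shiftFun m u (n - i) = 0 := by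
        unfold shiftFun
        rw [if_neg (by omega)]
      rw [h1, map_zero, smul_zero, sub_zero]
  · rw [if_neg h]
    unfold henselSum
    apply Finset.sum_eq_zero
    intro i hi
    rw [Finset.mem_range] at hi
    have h1 : shiftFun m u (n - i) = 0 := by
      unfold shiftFun
      rw [if_neg (by omega)]
    rw [h1, map_zero, smul_zero, sub_zero]

lemma henselSum_deshift (D : ℕ → E →ₗ[k] E) (α : ℕ → k) (q : ℕ) (u : ℕ → E)
    (hu : ∀ i, i < q → u i = 0) (n : ℕ) :
    henselSum D α (fun j => u (j + q)) n = henselSum D α u (n + q) := by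
  unfold henselSum
  rw [← Finset.sum_subset (Finset.range_subset_range.mpr (by omega : n + 1 ≤ n + q + 1))]
  · apply Finset.sum_congr rfl
    intro i hi
    rw [Finset.mem_range] at hi
    have : n + q - i = n - i + q := by omega
    rw [this]
  · intro i hi hi'
    rw [Finset.mem_range] at hi hi'
    rw [hu (n + q - i) (by omega), map_zero, smul_zero, sub_zero]

lemma henselSum_changeAlpha (D : ℕ → E →ₗ[k] E) (α α' : ℕ → k) (u : ℕ → E) (n : ℕ) :
    henselSum D α' u n
      = henselSum D α u n + ∑ i ∈ Finset.range (n + 1), (α i - α' i) • u (n - i) := by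
  unfold henselSum
  rw [← Finset.sum_add_distrib]
  apply Finset.sum_congr rfl
  intro i _
  rw [sub_smul]
  abel

lemma henselSum_of_low_zero (D : ℕ → E →ₗ[k] E) (α : ℕ → k) (u : ℕ → E) (n : ℕ)
    (hu : ∀ i, i < n → u i = 0) :
    henselSum D α u n = D 0 (u n) - α 0 • u n := by
  unfold henselSum
  rw [Finset.sum_eq_single_of_mem 0 (Finset.mem_range.mpr (by omega))]
  · rw [Nat.sub_zero]
  · intro i hi hi0
    rw [Finset.mem_range] at hi
    rw [hu (n - i) (by omega), map_zero, smul_zero, sub_zero]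

end Hensel

section Construct

variable {k : Type*} [Field k] {E : Type*} [AddCommGroup E] [Module k E]

noncomputable def henselSeq (D : ℕ → E →ₗ[k] E) (α₀ : k) (v : E) (sol : E → k × E) :
    ℕ → k × E
  | 0 => (α₀, v)
  | (n + 1) =>
      sol (-(∑ j : Fin (n + 1), D (j + 1) ((henselSeq D α₀ v sol (n - j)).2))
           + ∑ j : Fin n, (henselSeq D α₀ v sol (j + 1)).1 • (henselSeq D α₀ v sol (n - j)).2)
  termination_by n => n
  decreasing_by
  · exact Nat.lt_succ_of_le (Nat.sub_le n j)
  · exact Nat.succ_lt_succ j.isLt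
  · exact Nat.lt_succ_of_le (Nat.sub_le n j)

lemma henselSeq_spec (D : ℕ → E →ₗ[k] E) (α₀ : k) (v : E) (sol : E → k × E)
    (hsol : ∀ e : E, (D 0 (sol e).2 - α₀ • (sol e).2) - (sol e).1 • v = e)
    (hv : D 0 v = α₀ • v) (n : ℕ) :
    henselSum D (fun m => (henselSeq D α₀ v sol m).1) (fun m => (henselSeq D α₀ v sol m).2) n
      = 0 := by
  set αf : ℕ → k := fun m => (henselSeq D α₀ v sol m).1 with hαf
  set u : ℕ → E := fun m => (henselSeq D α₀ v sol m).2 with hu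
  have h00 : u 0 = v := by simp only [hu]; rw [henselSeq]
  have h01 : αf 0 = α₀ := by simp only [hαf]; rw [henselSeq]
  match n with
  | 0 =>
    unfold henselSum
    simp [h00, h01, hv]
  | n + 1 =>
    have hdef : henselSeq D α₀ v sol (n + 1)
        = sol (-(∑ j : Fin (n + 1), D (j + 1) (u (n - j)))
             + ∑ j : Fin n, αf (j + 1) • u (n - j)) := by
      rw [henselSeq]
    have hs := hsol (-(∑ j : Fin (n + 1), D (j + 1) (u (n - j)))
             + ∑ j : Fin n, αf (j + 1) • u (n - j))
    rw [← hdef] at hs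
    have hs' : D 0 (u (n + 1)) - α₀ • u (n + 1)
        = (-(∑ j : Fin (n + 1), D (j + 1) (u (n - j)))
            + ∑ j : Fin n, αf (j + 1) • u (n - j)) + αf (n + 1) • v := by
      have := sub_eq_iff_eq_add.mp hs
      exact this
    unfold henselSum
    rw [Finset.sum_range_succ']
    have hterm : ∑ i ∈ Finset.range (n + 1),
        (D (i + 1) (u (n + 1 - (i + 1))) - αf (i + 1) • u (n + 1 - (i + 1)))
        = ∑ i ∈ Finset.range (n + 1), (D (i + 1) (u (n - i)) - αf (i + 1) • u (n - i)) := by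
      apply Finset.sum_congr rfl
      intro i _
      have : n + 1 - (i + 1) = n - i := by omega
      rw [this]
    rw [hterm, Finset.sum_sub_distrib, Finset.sum_range_succ
      (fun i => αf (i + 1) • u (n - i)) n]
    rw [Fin.sum_univ_eq_sum_range (fun j => D (j + 1) (u (n - j))) (n + 1)] at hs'
    rw [Fin.sum_univ_eq_sum_range (fun j => αf (j + 1) • u (n - j)) n] at hs'
    have hnn : n - n = 0 := Nat.sub_self n
    rw [hnn, h00, h01, Nat.sub_zero, hs']
    abel

end Construct

section Unique

variable {k : Type*} [Field k] {E : Type*} [AddCommGroup E] [Module k E]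

lemma exists_normalized (D : ℕ → E →ₗ[k] E) (α : ℕ → k) (u : ℕ → E) (v : E)
    (hsol : ∀ n, henselSum D α u n = 0) (hu0 : u ≠ 0)
    (hker : ∀ w : E, D 0 w = α 0 • w → ∃ c : k, w = c • v) :
    ∃ w : ℕ → E, (∀ n, henselSum D α w n = 0) ∧ w 0 = v := by
  classical
  have hex : ∃ n, u n ≠ 0 := by
    by_contra h
    push_neg at h
    exact hu0 (funext fun n => h n)
  set q := Nat.find hex with hqdef
  have hq : u q ≠ 0 := Nat.find_spec hex
  have hlt : ∀ i, i < q → u i = 0 := fun i hi => not_not.mp (Nat.find_min hex hi)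
  have heq := hsol q
  rw [henselSum_of_low_zero D α u q hlt] at heq
  obtain ⟨c, hc⟩ := hker _ (sub_eq_zero.mp heq)
  have hc0 : c ≠ 0 := by
    rintro rfl
    rw [zero_smul] at hc
    exact hq hc
  refine ⟨c⁻¹ • (fun j => u (j + q)), ?_, ?_⟩
  · intro n
    rw [henselSum_smul, henselSum_deshift D α q u hlt, hsol (n + q), smul_zero]
  · show c⁻¹ • u (0 + q) = v
    rw [Nat.zero_add, hc, smul_smul, inv_mul_cancel₀ hc0, one_smul]

lemma hensel_unique (D : ℕ → E →ₗ[k] E) (α α' : ℕ → k) (u u' : ℕ → E) (v : E) (hv0 : v ≠ 0)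
    (h0 : α 0 = α' 0)
    (hsol : ∀ n, henselSum D α u n = 0) (hsol' : ∀ n, henselSum D α' u' n = 0)
    (hu0 : u 0 = v) (hu'0 : u' 0 = v)
    (hker : ∀ w : E, D 0 w = α' 0 • w → ∃ c : k, w = c • v)
    (hdisj : ∀ (x : E) (c : k), D 0 x - α' 0 • x = c • v → c = 0) :
    α = α' := by
  classical
  by_contra hne
  have hex : ∃ n, α n ≠ α' n := Function.ne_iff.mp hne
  set m := Nat.find hex with hmdef
  have hm : α m ≠ α' m := Nat.find_spec hex
  have hmin : ∀ i, i < m → α i = α' i := fun i hi => not_not.mp (Nat.find_min hex hi)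
  have key : ∀ j, j ≤ m → ∃ x : ℕ → E, (∀ i, i < j → x i = 0) ∧
      ∀ n, henselSum D α' x n = ∑ i ∈ Finset.range (n + 1), (α i - α' i) • u (n - i) := by
    intro j
    induction j with
    | zero =>
      intro _
      refine ⟨u - u', fun i hi => absurd hi (Nat.not_lt_zero i), fun n => ?_⟩
      rw [henselSum_sub, hsol' n, sub_zero, henselSum_changeAlpha D α α' u n, hsol n, zero_add]
    | succ j ih =>
      intro hj
      have hjm : j < m := Nat.lt_of_succ_le hj
      obtain ⟨x, hxz, hxs⟩ := ih (le_of_lt hjm)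
      have hxj : D 0 (x j) = α' 0 • x j := by
        have h1 := hxs j
        rw [henselSum_of_low_zero D α' x j hxz] at h1
        have h2 : ∑ i ∈ Finset.range (j + 1), (α i - α' i) • u (j - i) = 0 := by
          apply Finset.sum_eq_zero
          intro i hi
          rw [Finset.mem_range] at hi
          rw [hmin i (by omega), sub_self, zero_smul]
        rw [h2] at h1
        exact sub_eq_zero.mp h1
      obtain ⟨c, hc⟩ := hker (x j) hxj
      refine ⟨x - c • shiftFun j u', ?_, ?_⟩
      · intro i hi
        show x i - c • shiftFun j u' i = 0
        rcases Nat.lt_succ_iff_lt_or_eq.mp hi with hi' | rfl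
        · rw [hxz i hi']
          unfold shiftFun
          rw [if_neg (by omega), smul_zero, sub_zero]
        · unfold shiftFun
          rw [if_pos le_rfl, Nat.sub_self, hu'0, hc, sub_self]
      · intro n
        rw [henselSum_sub, henselSum_smul, henselSum_shiftFun, hxs n]
        by_cases h : j ≤ n
        · rw [if_pos h, hsol' (n - j), smul_zero, sub_zero]
        · rw [if_neg h, smul_zero, sub_zero]
  obtain ⟨x, hxz, hxs⟩ := key m le_rfl
  have h1 := hxs m
  rw [henselSum_of_low_zero D α' x m hxz] at h1
  have h2 : ∑ i ∈ Finset.range (m + 1), (α i - α' i) • u (m - i) = (α m - α' m) • v := by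
    rw [Finset.sum_eq_single_of_mem m (Finset.mem_range.mpr (by omega))]
    · rw [Nat.sub_self, hu0]
    · intro i hi hne'
      rw [Finset.mem_range] at hi
      rw [hmin i (by omega), sub_self, zero_smul]
  rw [h2] at h1
  exact hm (sub_eq_zero.mp (hdisj (x m) (α m - α' m) h1))

end Unique
/-- Hensel's lemma for operators on power series modules: if `D` is a `k[[t]]`-linear
endomorphism of `E ⊗_k k[[t]]` with `D(v) = ∑ tⁱ Dᵢ(v)` and the characteristic polynomial of
`D₀` has a simple root `α₀ ∈ k`, then there exist `α ∈ k[[t]]` with constant term `α₀` and a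
nonzero `u ∈ E ⊗_k k[[t]]` with `(D − α)(u) = 0`; moreover `α` is uniquely determined
by `α₀`. -/
theorem hensel_lemma_power_series
    {k : Type*} [Field k] [CharZero k] [IsAlgClosed k]
    {E : Type*} [AddCommGroup E] [Module k E] [FiniteDimensional k E]
    (D : ℕ → E →ₗ[k] E) (α₀ : k)
    (hsimple : ((D 0).charpoly).rootMultiplicity α₀ = 1) :
    (∃ α : ℕ → k, α 0 = α₀ ∧ ∃ u : ℕ → E, u ≠ 0 ∧ HenselSol D α u) ∧
    (∀ α α' : ℕ → k, α 0 = α₀ → α' 0 = α₀ →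
      (∃ u : ℕ → E, u ≠ 0 ∧ HenselSol D α u) →
      (∃ u' : ℕ → E, u' ≠ 0 ∧ HenselSol D α' u') → α = α') := by
  classical
  obtain ⟨v, hv0, hAv, hker0, hdisj0, hsurj⟩ := simple_root_package (D 0) α₀ hsimple
  have hHS : ∀ (α : ℕ → k) (u : ℕ → E), HenselSol D α u ↔ ∀ n, henselSum D α u n = 0 :=
    fun α u => Iff.rfl
  constructor
  · -- existence
    choose x μ hxμ using hsurj
    set sol : E → k × E := fun e => (-(μ e), x e) with hsoldef
    have hsolp : ∀ e : E, (D 0 (sol e).2 - α₀ • (sol e).2) - (sol e).1 • v = e := by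
      intro e
      simp only [hsoldef, neg_smul, sub_neg_eq_add]
      exact hxμ e
    refine ⟨fun n => (henselSeq D α₀ v sol n).1, ?_, fun n => (henselSeq D α₀ v sol n).2,
      ?_, ?_⟩
    · show (henselSeq D α₀ v sol 0).1 = α₀
      rw [henselSeq]
    · intro h
      apply hv0
      have h0 := congrFun h 0
      simp only [Pi.zero_apply] at h0
      rw [← show (henselSeq D α₀ v sol 0).2 = v from by rw [henselSeq], h0]
    · rw [hHS]
      exact henselSeq_spec D α₀ v sol hsolp hAv
  · -- uniqueness
    rintro α α' hα hα' ⟨u, hu0, hsol⟩ ⟨u', hu'0, hsol'⟩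
    rw [hHS] at hsol hsol'
    obtain ⟨w, hw, hw0⟩ := exists_normalized D α u v hsol hu0 (by rw [hα]; exact hker0)
    obtain ⟨w', hw', hw'0⟩ := exists_normalized D α' u' v hsol' hu'0 (by rw [hα']; exact hker0)
    exact hensel_unique D α α' w w' v hv0 (by rw [hα, hα']) hw hw' hw0 hw'0
      (by rw [hα']; exact hker0) (by rw [hα']; exact hdisj0)
end

section
/- (Truncated Hensel's lemma) Let E be a finite-dimensional k-vector space, D_0, D_1, …, D_m ∈ End_k(E), and suppose α_0 ∈ k is a simple root of the characteristic polynomial of D_0. Then there exist α_1, …, α_m ∈ k and u_0, …, u_m ∈ E with u_0 ≠ 0 satisfying Σ_{0≤i≤j} (D_i − α_i)(u_{j−i}) = 0 for all 0 ≤ j ≤ m; moreover α_1, …, α_m are uniquely determined by α_0. -/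
open Polynomial Module Finset

private lemma THL.sum_triangle {M : Type*} [AddCommMonoid M] (n : ℕ) (f : ℕ → ℕ → M) :
    ∑ i ∈ Finset.range n, ∑ l ∈ Finset.range (n - i), f i l
      = ∑ l ∈ Finset.range n, ∑ i ∈ Finset.range (n - l), f i l := by
  rw [Finset.sum_sigma', Finset.sum_sigma']
  refine Finset.sum_nbij' (fun x ↦ ⟨x.2, x.1⟩) (fun x ↦ ⟨x.2, x.1⟩) ?_ ?_ (fun _ _ ↦ rfl)
    (fun _ _ ↦ rfl) (fun _ _ ↦ rfl) <;>
  simp only [Finset.mem_range, Sigma.forall, Finset.mem_sigma] <;>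
  (rintro a b ⟨h₁, h₂⟩; omega)

private lemma THL.matrix_charpoly_shift {n : Type*} [DecidableEq n] [Fintype n]
    {R : Type*} [CommRing R] (M : Matrix n n R) (μ : R) :
    (M - μ • 1).charpoly = M.charpoly.comp (X + C μ) := by
  have hm : (aeval (X + C μ)).mapMatrix (Matrix.charmatrix M) = Matrix.charmatrix (M - μ • 1) := by
    refine Matrix.ext fun i j => ?_
    rw [AlgHom.mapMatrix_apply, Matrix.map_apply]
    by_cases h : i = j
    · subst h
      rw [Matrix.charmatrix_apply_eq, Matrix.charmatrix_apply_eq, map_sub, aeval_X, aeval_C]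
      have : (M - μ • 1) i i = M i i - μ := by
        simp [Matrix.sub_apply, Matrix.smul_apply, Matrix.one_apply_eq]
      rw [this, C_sub, algebraMap_eq]
      ring
    · rw [Matrix.charmatrix_apply_ne _ _ _ h, Matrix.charmatrix_apply_ne _ _ _ h, map_neg, aeval_C]
      have : (M - μ • 1) i j = M i j := by
        simp [Matrix.sub_apply, Matrix.smul_apply, Matrix.one_apply_ne h]
      rw [this, algebraMap_eq]
  rw [comp_eq_aeval, Matrix.charpoly, Matrix.charpoly, AlgHom.map_det, hm]

private lemma THL.end_charpoly_shift {k : Type*} [Field k] {E : Type*} [AddCommGroup E]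
    [Module k E] [FiniteDimensional k E] (f : Module.End k E) (μ : k) :
    (f - μ • 1).charpoly = f.charpoly.comp (X + C μ) := by
  let b := Module.finBasis k E
  rw [← LinearMap.charpoly_toMatrix f b, ← LinearMap.charpoly_toMatrix (f - μ • 1) b]
  rw [show LinearMap.toMatrix b b (f - μ • 1)
      = LinearMap.toMatrix b b f - μ • 1 by rw [map_sub, map_smul, LinearMap.toMatrix_one]]
  exact THL.matrix_charpoly_shift _ μ

private lemma THL.eigvec {k : Type*} [Field k] {E : Type*} [AddCommGroup E] [Module k E]
    (A : Module.End k E) : ∀ (n : ℕ) (v : E), v ≠ 0 → (A ^ n) v = 0 → ∃ u, u ≠ 0 ∧ A u = 0 := by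
  intro n
  induction n with
  | zero => intro v hv h; simp only [pow_zero, Module.End.one_apply] at h; exact absurd h hv
  | succ n ih =>
    intro v hv h
    by_cases hAv : A v = 0
    · exact ⟨v, hv, hAv⟩
    · exact ih (A v) hAv (by rw [← Module.End.mul_apply, ← pow_succ]; exact h)

private lemma THL.spectral {k : Type*} [Field k] {E : Type*} [AddCommGroup E] [Module k E]
    [FiniteDimensional k E] (A : Module.End k E)
    (hA : Module.finrank k ↥(A.maxGenEigenspace 0) = 1) :
    ∃ (u₀ : E) (P : E →ₗ[k] E), u₀ ≠ 0 ∧ A u₀ = 0 ∧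
      (∀ x, A x = 0 → ∃ c : k, x = c • u₀) ∧
      (∀ x, P (A x) = 0) ∧ (∀ x, A x = 0 → P x = x) ∧
      (∀ x, ∃ c : k, P x = c • u₀) ∧ (∀ x, ∃ y, x - P x = A y) := by
  set G := A.maxGenEigenspace 0 with hGdef
  have hmem : ∀ x : E, x ∈ G ↔ ∃ n : ℕ, (A ^ n) x = 0 := by
    intro x
    rw [hGdef, Module.End.mem_maxGenEigenspace]
    simp
  have hGbot : G ≠ ⊥ := by
    intro h
    rw [h] at hA
    simp at hA
  obtain ⟨v, hvG, hv0⟩ := Submodule.exists_mem_ne_zero_of_ne_bot hGbot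
  obtain ⟨n, hn⟩ := (hmem v).mp hvG
  obtain ⟨u₀, hu0, hAu0⟩ := THL.eigvec A n v hv0 hn
  have hkerG : LinearMap.ker A ≤ G := by
    intro x hx
    exact (hmem x).mpr ⟨1, by simpa using hx⟩
  have hspan_le : Submodule.span k {u₀} ≤ LinearMap.ker A := by
    rw [Submodule.span_singleton_le_iff_mem, LinearMap.mem_ker]
    exact hAu0
  have hspan_rank : Module.finrank k (Submodule.span k {u₀}) = 1 := finrank_span_singleton hu0
  have hker_eq : Submodule.span k {u₀} = LinearMap.ker A := by
    apply Submodule.eq_of_le_of_finrank_le hspan_le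
    rw [hspan_rank, ← hA]
    exact Submodule.finrank_mono hkerG
  have hGker : G = LinearMap.ker A := by
    refine (Submodule.eq_of_le_of_finrank_le hkerG ?_).symm
    rw [hA, ← hker_eq, hspan_rank]
  have hkermem : ∀ x, A x = 0 → ∃ c : k, x = c • u₀ := by
    intro x hx
    have : x ∈ Submodule.span k {u₀} := by rw [hker_eq]; exact hx
    obtain ⟨c, hc⟩ := Submodule.mem_span_singleton.mp this
    exact ⟨c, hc.symm⟩
  have hdis : Disjoint (LinearMap.ker A) (LinearMap.range A) := by
    rw [Submodule.disjoint_def]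
    intro x hx hx'
    obtain ⟨y, hy⟩ := hx'
    have hy2 : y ∈ G := (hmem y).mpr ⟨2, by
      rw [pow_two, Module.End.mul_apply, hy]; exact hx⟩
    rw [hGker, LinearMap.mem_ker] at hy2
    rw [← hy, hy2]
  have hcompl : IsCompl (LinearMap.ker A) (LinearMap.range A) := by
    refine ⟨hdis, ?_⟩
    rw [codisjoint_iff]
    apply Submodule.eq_top_of_finrank_eq
    have h1 := Submodule.finrank_sup_add_finrank_inf_eq (LinearMap.ker A) (LinearMap.range A)
    rw [disjoint_iff.mp hdis, finrank_bot, add_zero] at h1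
    rw [h1, add_comm]
    exact LinearMap.finrank_range_add_finrank_ker A
  set π := (LinearMap.ker A).projectionOnto (LinearMap.range A) hcompl with hπ
  refine ⟨u₀, (LinearMap.ker A).subtype.comp π, hu0, hAu0, hkermem, ?_, ?_, ?_, ?_⟩
  · intro x
    have : π (A x) = 0 :=
      Submodule.projectionOnto_apply_of_mem_right hcompl ⟨x, rfl⟩
    simp [this]
  · intro x hx
    have : π x = ⟨x, hx⟩ := Submodule.projectionOnto_apply_left hcompl ⟨x, hx⟩
    simp [this]
  · intro x
    have : ((π x : E)) ∈ Submodule.span k {u₀} := by rw [hker_eq]; exact (π x).2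
    obtain ⟨c, hc⟩ := Submodule.mem_span_singleton.mp this
    exact ⟨c, by simpa using hc.symm⟩
  · intro x
    have h0 : π (x - (LinearMap.ker A).subtype (π x)) = 0 := by
      rw [map_sub]
      rw [show π ((LinearMap.ker A).subtype (π x)) = π x from
        Submodule.projectionOnto_apply_left hcompl (π x)]
      simp
    have := (Submodule.projectionOnto_apply_eq_zero_iff hcompl).mp h0
    obtain ⟨y, hy⟩ := this
    exact ⟨y, by simpa using hy.symm⟩

/-- Truncated Hensel's lemma: given `D₀, …, D_m ∈ End_k(E)` and a simple root `α₀` of the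
characteristic polynomial of `D₀`, there exist `α₁, …, α_m ∈ k` and `u₀, …, u_m ∈ E` with
`u₀ ≠ 0` satisfying `∑_{0≤i≤j} (Dᵢ − αᵢ)(u_{j−i}) = 0` for all `0 ≤ j ≤ m`; moreover
`α₁, …, α_m` are uniquely determined by `α₀`. -/
theorem truncated_hensel_lemma
    {k : Type*} [Field k] [CharZero k] [IsAlgClosed k]
    {E : Type*} [AddCommGroup E] [Module k E] [FiniteDimensional k E]
    (m : ℕ) (D : ℕ → E →ₗ[k] E) (α₀ : k)
    (hsimple : ((D 0).charpoly).rootMultiplicity α₀ = 1) :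
    (∃ (α : ℕ → k) (u : ℕ → E), α 0 = α₀ ∧ u 0 ≠ 0 ∧
      ∀ j ≤ m, ∑ i ∈ Finset.range (j + 1), (D i (u (j - i)) - α i • u (j - i)) = 0) ∧
    (∀ (α α' : ℕ → k) (u u' : ℕ → E), α 0 = α₀ → α' 0 = α₀ → u 0 ≠ 0 → u' 0 ≠ 0 →
      (∀ j ≤ m, ∑ i ∈ Finset.range (j + 1), (D i (u (j - i)) - α i • u (j - i)) = 0) →
      (∀ j ≤ m, ∑ i ∈ Finset.range (j + 1), (D i (u' (j - i)) - α' i • u' (j - i)) = 0) →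
      ∀ i ≤ m, α i = α' i) := by
  classical
  set A : E →ₗ[k] E := D 0 - α₀ • 1 with hAdef
  have hAapp : ∀ x : E, A x = D 0 x - α₀ • x := by
    intro x
    simp [hAdef, LinearMap.sub_apply, LinearMap.smul_apply, Module.End.one_apply]
  have hfin : Module.finrank k ↥(Module.End.maxGenEigenspace A 0) = 1 := by
    rw [LinearMap.finrank_maxGenEigenspace_zero_eq, hAdef, THL.end_charpoly_shift,
      ← rootMultiplicity_eq_natTrailingDegree]
    exact hsimple
  obtain ⟨u₀, P, hu₀, hAu₀, hker, hPA, hPfix, hPspan, hsplit⟩ := THL.spectral A hfin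
  constructor
  · -- Existence
    have exist : ∀ N : ℕ, ∃ (α : ℕ → k) (u : ℕ → E), α 0 = α₀ ∧ u 0 = u₀ ∧
        ∀ j ≤ N, ∑ i ∈ Finset.range (j + 1), (D i (u (j - i)) - α i • u (j - i)) = 0 := by
      intro N
      induction N with
      | zero =>
        refine ⟨fun _ => α₀, fun _ => u₀, rfl, rfl, ?_⟩
        intro j hj
        interval_cases j
        rw [Finset.sum_range_one, ← hAapp]
        exact hAu₀
      | succ N ih =>
        obtain ⟨α, u, hα0, hu0, heq⟩ := ih
        set r : E := (∑ i ∈ Finset.range (N + 1), D (i + 1) (u (N - i)))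
            - ∑ i ∈ Finset.range N, α (i + 1) • u (N - i) with hr
        obtain ⟨c, hc⟩ := hPspan r
        obtain ⟨y, hy⟩ := hsplit r
        have hAy : A (-y) = c • u₀ - r := by
          rw [map_neg, ← hy, hc]
          abel
        refine ⟨Function.update α (N + 1) c, Function.update u (N + 1) (-y), ?_, ?_, ?_⟩
        · rw [Function.update_of_ne (by omega)]; exact hα0
        · rw [Function.update_of_ne (by omega)]; exact hu0
        · intro j hj
          rcases Nat.lt_or_ge j (N + 1) with hj' | hj'
          · have hcongr : ∀ i ∈ Finset.range (j + 1),
                (D i ((Function.update u (N + 1) (-y)) (j - i))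
                  - (Function.update α (N + 1) c) i • (Function.update u (N + 1) (-y)) (j - i))
                = (D i (u (j - i)) - α i • u (j - i)) := by
              intro i hi
              rw [Finset.mem_range] at hi
              rw [Function.update_of_ne (show i ≠ N + 1 by omega),
                Function.update_of_ne (show j - i ≠ N + 1 by omega)]
            rw [Finset.sum_congr rfl hcongr]
            exact heq j (by omega)
          · have hj2 : j = N + 1 := le_antisymm hj hj'
            subst hj2
            rw [Finset.sum_range_succ', Finset.sum_range_succ]
            have hcongr : ∀ i ∈ Finset.range N,
                (D (i + 1) ((Function.update u (N + 1) (-y)) (N + 1 - (i + 1)))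
                  - (Function.update α (N + 1) c) (i + 1)
                      • (Function.update u (N + 1) (-y)) (N + 1 - (i + 1)))
                = (D (i + 1) (u (N - i)) - α (i + 1) • u (N - i)) := by
              intro i hi
              rw [Finset.mem_range] at hi
              have h1 : N + 1 - (i + 1) = N - i := by omega
              rw [h1, Function.update_of_ne (show i + 1 ≠ N + 1 by omega),
                Function.update_of_ne (show N - i ≠ N + 1 by omega)]
            rw [Finset.sum_congr rfl hcongr]
            rw [show N + 1 - (N + 1) = 0 from Nat.sub_self _,
              show N + 1 - 0 = N + 1 from Nat.sub_zero _,
              Function.update_self, Function.update_self,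
              Function.update_of_ne (show (0:ℕ) ≠ N + 1 by omega) (-y) u,
              Function.update_of_ne (show (0:ℕ) ≠ N + 1 by omega) c α,
              hu0, hα0, ← hAapp, hAy, hr,
              Finset.sum_sub_distrib, Finset.sum_range_succ,
              show N - N = 0 from Nat.sub_self _, hu0]
            abel
    obtain ⟨α, u, h1, h2, h3⟩ := exist m
    exact ⟨α, u, h1, by rw [h2]; exact hu₀, h3⟩
  · -- Uniqueness
    intro α α' u u' hα0 hα'0 hu0 hu'0 heq heq'
    have hAu : A (u 0) = 0 := by
      have h0 := heq 0 (Nat.zero_le m)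
      rw [Finset.sum_range_one] at h0
      rw [hAapp, ← hα0]
      exact h0
    have hAu' : A (u' 0) = 0 := by
      have h0 := heq' 0 (Nat.zero_le m)
      rw [Finset.sum_range_one] at h0
      rw [hAapp, ← hα'0]
      exact h0
    obtain ⟨d, hd⟩ := hker (u 0) hAu
    have hdne : d ≠ 0 := fun h => hu0 (by rw [hd, h, zero_smul])
    have key : ∀ j, j ≤ m → (∀ i ≤ j, α i = α' i) ∧
        ∃ c : ℕ → k, (∀ l, j < l → c l = 0) ∧
          ∀ i ≤ j, u' i = ∑ l ∈ Finset.range (i + 1), c l • u (i - l) := by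
      intro j
      induction j with
      | zero =>
        intro _
        obtain ⟨e, he⟩ := hker (u' 0) hAu'
        constructor
        · intro i hi
          interval_cases i
          rw [hα0, hα'0]
        · refine ⟨fun l => if l = 0 then e / d else 0, fun l hl => if_neg (by omega), ?_⟩
          intro i hi
          interval_cases i
          rw [Finset.sum_range_one]
          show u' 0 = (if (0:ℕ) = 0 then e / d else 0) • u (0 - 0)
          rw [if_pos rfl, Nat.sub_self, hd, smul_smul, div_mul_cancel₀ _ hdne, ← he]
      | succ j ih =>
        intro hj
        obtain ⟨hαeq, c, hc0, hcu⟩ := ih (by omega)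
        set V : ℕ → E := fun n => ∑ l ∈ Finset.range (n + 1), c l • u (n - l) with hVdef
        have hVle : ∀ n, n ≤ j → V n = u' n := fun n hn => (hcu n hn).symm
        have hV0 : V 0 = u' 0 := hVle 0 (Nat.zero_le _)
        have claim1 : ∑ i ∈ Finset.range (j + 1 + 1),
            (D i (V (j + 1 - i)) - α i • V (j + 1 - i)) = 0 := by
          have step1 : ∀ i ∈ Finset.range (j + 1 + 1),
              (D i (V (j + 1 - i)) - α i • V (j + 1 - i))
                = ∑ l ∈ Finset.range (j + 1 + 1 - i),
                    c l • (D i (u (j + 1 - i - l)) - α i • u (j + 1 - i - l)) := by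
            intro i hi
            rw [Finset.mem_range] at hi
            have hni : j + 1 - i + 1 = j + 1 + 1 - i := by omega
            rw [hVdef]
            simp only
            rw [hni, map_sum, Finset.smul_sum, ← Finset.sum_sub_distrib]
            refine Finset.sum_congr rfl fun l hl => ?_
            rw [map_smul, smul_comm (α i) (c l), ← smul_sub]
          rw [Finset.sum_congr rfl step1, THL.sum_triangle]
          refine Finset.sum_eq_zero fun l hl => ?_
          rw [Finset.mem_range] at hl
          rw [← Finset.smul_sum]
          have h3 : j + 1 + 1 - l = (j + 1 - l) + 1 := by omega
          have h4 : ∑ i ∈ Finset.range (j + 1 + 1 - l),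
              (D i (u (j + 1 - i - l)) - α i • u (j + 1 - i - l))
              = ∑ i ∈ Finset.range ((j + 1 - l) + 1),
                  (D i (u ((j + 1 - l) - i)) - α i • u ((j + 1 - l) - i)) := by
            rw [h3]
            refine Finset.sum_congr rfl fun i _ => ?_
            have h5 : j + 1 - i - l = j + 1 - l - i := by omega
            rw [h5]
          rw [h4, heq (j + 1 - l) (by omega), smul_zero]
        have key1 : ∑ i ∈ Finset.range (j + 1 + 1),
            ((D i (u' (j + 1 - i)) - α' i • u' (j + 1 - i))
              - (D i (V (j + 1 - i)) - α i • V (j + 1 - i)))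
            = A (u' (j + 1) - V (j + 1)) - (α' (j + 1) - α (j + 1)) • u' 0 := by
          rw [Finset.sum_range_succ', Finset.sum_range_succ]
          have hmid : ∀ i ∈ Finset.range j,
              ((D (i + 1) (u' (j + 1 - (i + 1))) - α' (i + 1) • u' (j + 1 - (i + 1)))
                - (D (i + 1) (V (j + 1 - (i + 1))) - α (i + 1) • V (j + 1 - (i + 1)))) = 0 := by
            intro i hi
            rw [Finset.mem_range] at hi
            have h1 : j + 1 - (i + 1) = j - i := by omega
            rw [h1, hVle (j - i) (by omega), hαeq (i + 1) (by omega), sub_self]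
          rw [Finset.sum_eq_zero hmid, zero_add, Nat.sub_self, hV0, hα0, hα'0,
            hAapp, map_sub, smul_sub, sub_smul]
          module
        have h0 : ∑ i ∈ Finset.range (j + 1 + 1),
            ((D i (u' (j + 1 - i)) - α' i • u' (j + 1 - i))
              - (D i (V (j + 1 - i)) - α i • V (j + 1 - i))) = 0 := by
          rw [Finset.sum_sub_distrib, heq' (j + 1) hj, claim1, sub_zero]
        rw [key1] at h0
        have hAw : A (u' (j + 1) - V (j + 1)) = (α' (j + 1) - α (j + 1)) • u' 0 :=
          sub_eq_zero.mp h0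
        have hβ' : α' (j + 1) = α (j + 1) := by
          have h1 : P (A (u' (j + 1) - V (j + 1))) = 0 := hPA _
          rw [hAw, map_smul, hPfix _ hAu'] at h1
          rcases smul_eq_zero.mp h1 with h | h
          · exact sub_eq_zero.mp h
          · exact absurd h hu'0
        have hβ : α (j + 1) = α' (j + 1) := hβ'.symm
        rw [hβ', sub_self, zero_smul] at hAw
        obtain ⟨s, hs⟩ := hker _ hAw
        have hw : u' (j + 1) = V (j + 1) + (s / d) • u 0 := by
          rw [hd, smul_smul, div_mul_cancel₀ _ hdne, ← hs]
          abel
        refine ⟨?_, Function.update c (j + 1) (s / d), ?_, ?_⟩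
        · intro i hi
          rcases Nat.lt_or_ge i (j + 1) with h | h
          · exact hαeq i (by omega)
          · have : i = j + 1 := by omega
            rw [this]
            exact hβ
        · intro l hl
          rw [Function.update_of_ne (by omega)]
          exact hc0 l (by omega)
        · intro i hi
          rcases Nat.lt_or_ge i (j + 1) with h | h
          · have hcongr : ∀ l ∈ Finset.range (i + 1),
                (Function.update c (j + 1) (s / d)) l • u (i - l) = c l • u (i - l) := by
              intro l hl
              rw [Finset.mem_range] at hl
              rw [Function.update_of_ne (show l ≠ j + 1 by omega)]
            rw [Finset.sum_congr rfl hcongr]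
            exact hcu i (by omega)
          · have hieq : i = j + 1 := by omega
            subst hieq
            rw [Finset.sum_range_succ, Nat.sub_self, Function.update_self]
            have hcongr : ∀ l ∈ Finset.range (j + 1),
                (Function.update c (j + 1) (s / d)) l • u (j + 1 - l) = c l • u (j + 1 - l) := by
              intro l hl
              rw [Finset.mem_range] at hl
              rw [Function.update_of_ne (show l ≠ j + 1 by omega)]
            rw [Finset.sum_congr rfl hcongr]
            have hVsplit : V (j + 1) = ∑ l ∈ Finset.range (j + 1), c l • u (j + 1 - l) := by
              rw [hVdef]
              simp only
              rw [Finset.sum_range_succ, hc0 (j + 1) (by omega), zero_smul, add_zero]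
            rw [← hVsplit]
            exact hw
    exact fun i hi => (key m le_rfl).1 i hi
end

section
/- Let r, s ≥ 1, d = gcd(r,s), μ a primitive (r+s)-th root of unity, a_0 ≠ 0 in k with fixed (r+s)-th root, and A_0 = [[0, I_s],[a_0 I_r, 0]]. For each j, the kernel of A_0 − μ^{rj} a_0^{r/(r+s)} is spanned by the eigenvectors e_m with (r+s) | (m−j)d, and the image of A_0 − μ^{rj} a_0^{r/(r+s)} equals {v : ε_m · v = 0 for all m with (r+s) | (m−j)d}. -/
/-- The matrix `A₀ = [[0, I_s],[a₀·I_r, 0]]` of size `(r+s)×(r+s)`. -/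
def A0mat {k : Type*} [Field k] (r s : ℕ) (a0 : k) : Matrix (Fin (r + s)) (Fin (r + s)) k :=
  fun i j => if (j : ℕ) = (i : ℕ) + r then 1 else if (i : ℕ) = (j : ℕ) + s then a0 else 0

open Matrix Finset


section Aux
variable {k : Type*} [Field k] {n : ℕ} {A P Q : Matrix (Fin n) (Fin n) k}
  {dv : Fin n → k} {lam : k}

theorem aux_key (hQP : Q * P = 1) (hAP : A * P = P * Matrix.diagonal dv) (v : Fin n → k) :
    A *ᵥ v = lam • v ↔ ∀ m, dv m * (Q *ᵥ v) m = lam * (Q *ᵥ v) m := by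
  have hPQ : P * Q = 1 := mul_eq_one_comm.mpr hQP
  have hA : A = P * Matrix.diagonal dv * Q := by
    calc A = A * (P * Q) := by rw [hPQ, Matrix.mul_one]
    _ = A * P * Q := by rw [Matrix.mul_assoc]
    _ = P * Matrix.diagonal dv * Q := by rw [hAP]
  constructor
  · intro h m
    have h2 : Q *ᵥ (A *ᵥ v) = Q *ᵥ (lam • v) := by rw [h]
    rw [Matrix.mulVec_mulVec, hA, Matrix.mulVec_smul] at h2
    have h3 : Q * (P * Matrix.diagonal dv * Q) = Matrix.diagonal dv * Q := by
      rw [show P * Matrix.diagonal dv * Q = P * (Matrix.diagonal dv * Q) by rw [Matrix.mul_assoc],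
        ← Matrix.mul_assoc, hQP, Matrix.one_mul]
    rw [h3, ← Matrix.mulVec_mulVec] at h2
    have := congrFun h2 m
    simpa [Matrix.mulVec_diagonal] using this
  · intro h
    have h2 : Matrix.diagonal dv *ᵥ (Q *ᵥ v) = lam • (Q *ᵥ v) := by
      funext m
      simpa [Matrix.mulVec_diagonal] using h m
    have h3 : P *ᵥ (Matrix.diagonal dv *ᵥ (Q *ᵥ v)) = P *ᵥ (lam • (Q *ᵥ v)) := by rw [h2]
    rw [Matrix.mulVec_smul, Matrix.mulVec_mulVec, Matrix.mulVec_mulVec,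
      Matrix.mulVec_mulVec] at h3
    have hv : (P * Q) *ᵥ v = v := by rw [hPQ, Matrix.one_mulVec]
    rw [hA]
    rw [h3, hv]

theorem aux_mem_ker (hQP : Q * P = 1) (v : Fin n → k) :
    v ∈ LinearMap.ker (Matrix.mulVecLin (A - lam • (1 : Matrix (Fin n) (Fin n) k))) ↔
      A *ᵥ v = lam • v := by
  rw [LinearMap.mem_ker, Matrix.mulVecLin_apply, Matrix.sub_mulVec, sub_eq_zero,
    Matrix.smul_mulVec, Matrix.one_mulVec]

theorem aux_ker (hQP : Q * P = 1) (hAP : A * P = P * Matrix.diagonal dv) :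
    LinearMap.ker (Matrix.mulVecLin (A - lam • (1 : Matrix (Fin n) (Fin n) k))) =
      Submodule.span k ((fun m : Fin n => fun i => P i m) '' {m | dv m = lam}) := by
  have hPQ : P * Q = 1 := mul_eq_one_comm.mpr hQP
  apply le_antisymm
  · intro v hv
    rw [aux_mem_ker hQP, aux_key hQP hAP] at hv
    have hvP : v = P *ᵥ (Q *ᵥ v) := by
      rw [Matrix.mulVec_mulVec, hPQ, Matrix.one_mulVec]
    rw [hvP]
    have : P *ᵥ (Q *ᵥ v) = ∑ m : Fin n, (Q *ᵥ v) m • (fun i => P i m) := by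
      funext i
      rw [Finset.sum_apply]
      simp [Matrix.mulVec, dotProduct, mul_comm]
    rw [this]
    apply Submodule.sum_mem
    intro m _
    by_cases hm : dv m = lam
    · exact Submodule.smul_mem _ _ (Submodule.subset_span ⟨m, hm, rfl⟩)
    · have : (Q *ᵥ v) m = 0 := by
        have := hv m
        rcases mul_eq_mul_right_iff.mp this with h | h
        · exact absurd h hm
        · exact h
      simp [this]
  · rw [Submodule.span_le]
    rintro _ ⟨m, hm, rfl⟩
    simp only [Set.mem_setOf_eq] at hm
    rw [SetLike.mem_coe, aux_mem_ker hQP, aux_key hQP hAP]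
    beta_reduce
    intro m'
    have hcol : (fun i => P i m) = P *ᵥ Pi.single m 1 := by
      funext i; simp [Matrix.mulVec_single]
    rw [hcol, Matrix.mulVec_mulVec, hQP, Matrix.one_mulVec]
    by_cases h : m' = m
    · subst h; simp [hm]
    · simp [Pi.single_eq_of_ne h]

theorem aux_range (hQP : Q * P = 1) (hAP : A * P = P * Matrix.diagonal dv) (v : Fin n → k) :
    v ∈ LinearMap.range (Matrix.mulVecLin (A - lam • (1 : Matrix (Fin n) (Fin n) k))) ↔
      ∀ m, dv m = lam → (Q *ᵥ v) m = 0 := by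
  have hPQ : P * Q = 1 := mul_eq_one_comm.mpr hQP
  constructor
  · rintro ⟨w, rfl⟩ m hm
    have hQA : Q * A = Matrix.diagonal dv * Q := by
      calc Q * A = Q * A * (P * Q) := by rw [hPQ, Matrix.mul_one]
      _ = Q * (A * P) * Q := by rw [Matrix.mul_assoc, Matrix.mul_assoc, Matrix.mul_assoc]
      _ = Q * (P * Matrix.diagonal dv) * Q := by rw [hAP]
      _ = Matrix.diagonal dv * Q := by
          rw [← Matrix.mul_assoc, hQP, Matrix.one_mul]
    have h1 : Q *ᵥ (Matrix.mulVecLin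
        (A - lam • (1 : Matrix (Fin n) (Fin n) k)) w) =
        Matrix.diagonal dv *ᵥ (Q *ᵥ w) - lam • (Q *ᵥ w) := by
      rw [Matrix.mulVecLin_apply, Matrix.sub_mulVec, Matrix.smul_mulVec, Matrix.one_mulVec,
        Matrix.mulVec_sub, Matrix.mulVec_smul, Matrix.mulVec_mulVec, hQA, ← Matrix.mulVec_mulVec]
    rw [h1]
    simp only [Pi.sub_apply, Matrix.mulVec_diagonal, Pi.smul_apply, smul_eq_mul, hm, sub_self]
  · intro h
    classical
    set c : Fin n → k := fun m => if dv m = lam then 0 else (Q *ᵥ v) m / (dv m - lam) with hc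
    refine ⟨P *ᵥ c, ?_⟩
    rw [Matrix.mulVecLin_apply, Matrix.sub_mulVec, Matrix.smul_mulVec, Matrix.one_mulVec,
      Matrix.mulVec_mulVec, hAP, ← Matrix.mulVec_mulVec, ← Matrix.mulVec_smul, ← Matrix.mulVec_sub]
    have hdc : Matrix.diagonal dv *ᵥ c - lam • c = Q *ᵥ v := by
      funext m
      by_cases hm : dv m = lam
      · simp [Matrix.mulVec_diagonal, hc, hm, h m hm]
      · have hne : dv m - lam ≠ 0 := sub_ne_zero.mpr hm
        simp only [Pi.sub_apply, Matrix.mulVec_diagonal, Pi.smul_apply, smul_eq_mul, hc]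
        rw [if_neg hm]
        field_simp
    rw [hdc, Matrix.mulVec_mulVec, hPQ, Matrix.one_mulVec]

end Aux

/-- eigenvector matrix -/
def Pmat {k : Type*} [Field k] (n : ℕ) (μ ρ : k) : Matrix (Fin n) (Fin n) k :=
  fun i m => μ ^ (((m : ℕ) + 1) * ((i : ℕ) + 1)) * ρ ^ ((i : ℕ) + 1)

def Qmat {k : Type*} [Field k] (n : ℕ) (μ ρ : k) : Matrix (Fin n) (Fin n) k :=
  fun m i => (n : k)⁻¹ * (μ ^ (((m : ℕ) + 1) * ((i : ℕ) + 1)) * ρ ^ ((i : ℕ) + 1))⁻¹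

theorem prim_pow_eq_pow_iff {k : Type*} [Field k] {n : ℕ} {μ : k} (hμ0 : μ ≠ 0)
    (hμ : IsPrimitiveRoot μ n) (a b : ℕ) : μ ^ a = μ ^ b ↔ a ≡ b [MOD n] := by
  have key : ∀ a b : ℕ, a ≤ b → μ ^ a = μ ^ b → a ≡ b [MOD n] := by
    intro a b hab h
    have h1 : μ ^ a * μ ^ (b - a) = μ ^ a * 1 := by
      rw [← pow_add, Nat.add_sub_cancel' hab, ← h, mul_one]
    have h2 := mul_left_cancel₀ (pow_ne_zero a hμ0) h1
    exact (Nat.modEq_iff_dvd' hab).mpr ((hμ.pow_eq_one_iff_dvd _).mp h2)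
  constructor
  · intro h
    rcases le_total a b with hab | hab
    · exact key a b hab h
    · exact (key b a hab h.symm).symm
  · intro h
    have ha : μ ^ a = μ ^ (a % n) := by
      conv_lhs => rw [← Nat.div_add_mod a n]
      rw [pow_add, pow_mul, hμ.pow_eq_one, one_pow, one_mul]
    have hb : μ ^ b = μ ^ (b % n) := by
      conv_lhs => rw [← Nat.div_add_mod b n]
      rw [pow_add, pow_mul, hμ.pow_eq_one, one_pow, one_mul]
    rw [ha, hb, h]

theorem Qmat_mul_Pmat {k : Type*} [Field k] [CharZero k] {n : ℕ} (hn : 0 < n) {μ ρ : k}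
    (hμ : IsPrimitiveRoot μ n) (hρ0 : ρ ≠ 0) : Qmat n μ ρ * Pmat n μ ρ = 1 := by
  have hμ0 : μ ≠ 0 := by
    intro h
    have := hμ.pow_eq_one
    rw [h, zero_pow hn.ne'] at this
    exact zero_ne_one this
  have hncast : (n : k) ≠ 0 := Nat.cast_ne_zero.mpr hn.ne'
  ext m m'
  rw [Matrix.mul_apply]
  set ζ : k := μ ^ ((m' : ℕ) + 1) * (μ ^ ((m : ℕ) + 1))⁻¹ with hζ
  have hterm : ∀ i : Fin n, Qmat n μ ρ m i * Pmat n μ ρ i m' = (n : k)⁻¹ * ζ ^ ((i : ℕ) + 1) := by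
    intro i
    simp only [Qmat, Pmat, hζ]
    rw [mul_pow, ← pow_mul, inv_pow, ← pow_mul]
    rw [mul_comm ((m' : ℕ) + 1) ((i : ℕ) + 1), mul_comm ((m : ℕ) + 1) ((i : ℕ) + 1)]
    field_simp
  rw [Finset.sum_congr rfl (fun i _ => hterm i), ← Finset.mul_sum]
  have hsum : ∑ i : Fin n, ζ ^ ((i : ℕ) + 1) = (∑ i ∈ Finset.range n, ζ ^ i) * ζ := by
    rw [Finset.sum_mul, ← Fin.sum_univ_eq_sum_range (fun i => ζ ^ i * ζ) n]
    exact Finset.sum_congr rfl (fun i _ => (pow_succ ζ i))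
  by_cases h : m = m'
  · subst h
    have hζ1 : ζ = 1 := mul_inv_cancel₀ (pow_ne_zero _ hμ0)
    rw [hsum, hζ1]
    simp [Matrix.one_apply, hncast]
  · have hζn : ζ ^ n = 1 := by
      rw [hζ, mul_pow, inv_pow, ← pow_mul, ← pow_mul,
        mul_comm ((m' : ℕ) + 1) n, mul_comm ((m : ℕ) + 1) n, pow_mul, pow_mul, hμ.pow_eq_one,
        one_pow, one_pow, inv_one, mul_one]
    have hζ1 : ζ ≠ 1 := by
      intro hc
      apply h
      have : μ ^ ((m' : ℕ) + 1) = μ ^ ((m : ℕ) + 1) := by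
        have := mul_inv_eq_one₀ (pow_ne_zero ((m : ℕ) + 1) hμ0) |>.mp hc
        exact this
      have hmod := (prim_pow_eq_pow_iff hμ0 hμ _ _).mp this
      have hmod2 : ((m' : ℕ)) ≡ (m : ℕ) [MOD n] := Nat.ModEq.add_right_cancel' 1 hmod
      have h1 : (m' : ℕ) % n = (m : ℕ) % n := hmod2
      rw [Nat.mod_eq_of_lt m'.2, Nat.mod_eq_of_lt m.2] at h1
      exact Fin.ext h1.symm
    rw [hsum, geom_sum_eq hζ1, hζn]
    simp [Matrix.one_apply, h]


theorem A0_mul_Pmat {k : Type*} [Field k] (r s : ℕ) {a0 μ ρ : k}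
    (hμ : IsPrimitiveRoot μ (r + s)) (hρ : ρ ^ (r + s) = a0) :
    A0mat r s a0 * Pmat (r + s) μ ρ =
      Pmat (r + s) μ ρ * Matrix.diagonal (fun m : Fin (r + s) => μ ^ (r * ((m : ℕ) + 1)) * ρ ^ r) := by
  ext i m
  rw [Matrix.mul_apply, Matrix.mul_diagonal]
  by_cases hi : (i : ℕ) < s
  · set j0 : Fin (r + s) := ⟨(i : ℕ) + r, by omega⟩ with hj0
    have hj0v : (j0 : ℕ) = (i : ℕ) + r := rfl
    rw [Finset.sum_eq_single j0]
    · have h1 : A0mat r s a0 i j0 = 1 := by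
        show (if ((j0 : ℕ) = (i : ℕ) + r) then (1 : k)
          else if (i : ℕ) = (j0 : ℕ) + s then a0 else 0) = 1
        rw [if_pos hj0v]
      rw [h1, one_mul]
      show μ ^ (((m : ℕ) + 1) * (((i : ℕ) + r) + 1)) * ρ ^ (((i : ℕ) + r) + 1)
        = μ ^ (((m : ℕ) + 1) * ((i : ℕ) + 1)) * ρ ^ ((i : ℕ) + 1) *
          (μ ^ (r * ((m : ℕ) + 1)) * ρ ^ r)
      rw [mul_mul_mul_comm, ← pow_add, ← pow_add]
      congr 2
      · ring
      · ring
    · intro j _ hj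
      have hjv : (j : ℕ) ≠ (i : ℕ) + r := fun hc => hj (Fin.ext (by rw [hc, hj0v]))
      have h0 : A0mat r s a0 i j = 0 := by
        simp only [A0mat, if_neg hjv, if_neg (by omega : ¬ ((i : ℕ) = (j : ℕ) + s))]
      rw [h0, zero_mul]
    · intro h; exact absurd (Finset.mem_univ j0) h
  · push_neg at hi
    obtain ⟨t, ht⟩ := Nat.exists_eq_add_of_le hi
    set j0 : Fin (r + s) := ⟨t, by omega⟩ with hj0
    have hj0v : (j0 : ℕ) = t := rfl
    rw [Finset.sum_eq_single j0]
    · have h1 : A0mat r s a0 i j0 = a0 := by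
        have hio : ¬ ((j0 : ℕ) = (i : ℕ) + r) := by rw [hj0v]; omega
        have hi2 : (i : ℕ) = (j0 : ℕ) + s := by rw [hj0v]; omega
        simp only [A0mat]
        rw [if_neg hio, if_pos hi2]
      rw [h1]
      show a0 * (μ ^ (((m : ℕ) + 1) * (t + 1)) * ρ ^ (t + 1))
        = μ ^ (((m : ℕ) + 1) * ((i : ℕ) + 1)) * ρ ^ ((i : ℕ) + 1) *
          (μ ^ (r * ((m : ℕ) + 1)) * ρ ^ r)
      rw [ht, mul_mul_mul_comm, ← pow_add, ← pow_add]
      have hE : ((m : ℕ) + 1) * ((s + t) + 1) + r * ((m : ℕ) + 1)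
          = ((m : ℕ) + 1) * (t + 1) + (r + s) * ((m : ℕ) + 1) := by ring
      have hF : ((s + t) + 1) + r = (t + 1) + (r + s) := by ring
      rw [hE, hF, pow_add μ (((m : ℕ) + 1) * (t + 1)) ((r + s) * ((m : ℕ) + 1)),
        pow_add ρ (t + 1) (r + s), pow_mul μ (r + s) ((m : ℕ) + 1), hμ.pow_eq_one, one_pow,
        mul_one, hρ]
      ring
    · intro j _ hj
      have hjlt : (j : ℕ) < r + s := j.2
      have h0 : A0mat r s a0 i j = 0 := by
        simp only [A0mat]
        rw [if_neg (by omega : ¬ ((j : ℕ) = (i : ℕ) + r)),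
          if_neg (fun hc => hj (Fin.ext (by omega)))]
      rw [h0, zero_mul]
    · intro h; exact absurd (Finset.mem_univ j0) h

theorem dvd_mul_left_iff_gcd (r s : ℕ) (hr : 1 ≤ r) (t : ℤ) :
    ((r + s : ℕ) : ℤ) ∣ (r : ℤ) * t ↔ ((r + s : ℕ) : ℤ) ∣ t * (Nat.gcd r s : ℤ) := by
  set g := Nat.gcd r s with hgdef
  have hg : Nat.gcd r (r + s) = g := by
    rw [Nat.add_comm r s, Nat.gcd_add_self_right]
  have hgpos : 0 < g := Nat.gcd_pos_of_pos_left s hr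
  have hgr : g ∣ r := Nat.gcd_dvd_left r s
  have hgn : g ∣ r + s := dvd_add hgr (Nat.gcd_dvd_right r s)
  have hcop : Nat.Coprime ((r + s) / g) (r / g) := by
    have := Nat.coprime_div_gcd_div_gcd (m := r) (n := r + s) (by rw [hg]; exact hgpos)
    rw [hg] at this
    exact this.symm
  have hrg : (r : ℤ) = (g : ℤ) * ((r / g : ℕ) : ℤ) := by
    exact_mod_cast (Nat.mul_div_cancel' hgr).symm
  have hng : ((r + s : ℕ) : ℤ) = (g : ℤ) * (((r + s) / g : ℕ) : ℤ) := by
    exact_mod_cast (Nat.mul_div_cancel' hgn).symm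
  have hg0 : (g : ℤ) ≠ 0 := Int.natCast_ne_zero.mpr hgpos.ne'
  constructor
  · intro h
    rw [hng, hrg] at h
    rw [mul_assoc, mul_dvd_mul_iff_left hg0] at h
    have hcop' : IsCoprime ((((r + s) / g : ℕ)) : ℤ) (((r / g : ℕ)) : ℤ) :=
      Nat.isCoprime_iff_coprime.mpr hcop
    have h2 : (((r + s) / g : ℕ) : ℤ) ∣ t := hcop'.dvd_of_dvd_mul_left h
    rw [hng]
    obtain ⟨c, hc⟩ := h2
    exact ⟨c, by rw [hc]; ring⟩
  · intro h
    have h2 : t * (g : ℤ) ∣ (r : ℤ) * t := by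
      rw [hrg]
      exact ⟨((r / g : ℕ) : ℤ), by ring⟩
    exact dvd_trans h h2

theorem dvec_eq_lam_iff {k : Type*} [Field k] (r s : ℕ) (hr : 1 ≤ r) {μ ρ : k}
    (hμ : IsPrimitiveRoot μ (r + s)) (hμ0 : μ ≠ 0) (hρ0 : ρ ≠ 0) (j : ℕ) (m : Fin (r + s)) :
    μ ^ (r * ((m : ℕ) + 1)) * ρ ^ r = μ ^ (r * j) * ρ ^ r ↔
      ((r + s : ℕ) : ℤ) ∣ ((((m : ℕ) : ℤ) + 1) - (j : ℤ)) * (Nat.gcd r s : ℤ) := by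
  rw [mul_left_inj' (pow_ne_zero r hρ0), prim_pow_eq_pow_iff hμ0 hμ, Nat.modEq_iff_dvd]
  have he : ((r * j : ℕ) : ℤ) - ((r * ((m : ℕ) + 1) : ℕ) : ℤ)
      = -((r : ℤ) * ((((m : ℕ) : ℤ) + 1) - (j : ℤ))) := by push_cast; ring
  rw [he, dvd_neg, dvd_mul_left_iff_gcd r s hr]

/-- With `d = gcd(r,s)`, `μ` a primitive `(r+s)`-th root of unity and `ρ` a fixed `(r+s)`-th
root of `a₀ ≠ 0`, the kernel of `A₀ − μ^{rj}·ρ^r` is spanned by the eigenvectors `e_m` with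
`(r+s) ∣ (m−j)d` (for `1 ≤ m ≤ r+s`), and its image is
`{v : ε_m·v = 0 for all 1 ≤ m ≤ r+s with (r+s) ∣ (m−j)d}`, where
`e_m = (μ^m ρ, …, μ^{m(r+s-1)} ρ^{r+s-1}, a₀)ᵀ` and `ε_m = (μ^{-m} ρ⁻¹, …, a₀⁻¹)`. -/
theorem ker_and_range_of_A0_minus_eigenvalue
    {k : Type*} [Field k] [CharZero k] [IsAlgClosed k] (r s : ℕ) (hr : 1 ≤ r) (hs : 1 ≤ s)
    (a0 μ ρ : k) (ha0 : a0 ≠ 0) (hμ : IsPrimitiveRoot μ (r + s)) (hρ : ρ ^ (r + s) = a0)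
    (j : ℕ) :
    (LinearMap.ker (Matrix.mulVecLin
        (A0mat r s a0 - (μ ^ (r * j) * ρ ^ r) • (1 : Matrix (Fin (r + s)) (Fin (r + s)) k))) =
      Submodule.span k
        ((fun m : ℕ => fun i : Fin (r + s) => μ ^ (m * ((i : ℕ) + 1)) * ρ ^ ((i : ℕ) + 1)) ''
          {m : ℕ | m ∈ Finset.Icc 1 (r + s) ∧
            ((r + s : ℕ) : ℤ) ∣ ((m : ℤ) - (j : ℤ)) * (Nat.gcd r s : ℤ)})) ∧
    (∀ v : Fin (r + s) → k,
      v ∈ LinearMap.range (Matrix.mulVecLin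
        (A0mat r s a0 - (μ ^ (r * j) * ρ ^ r) • (1 : Matrix (Fin (r + s)) (Fin (r + s)) k))) ↔
      ∀ m ∈ Finset.Icc 1 (r + s), ((r + s : ℕ) : ℤ) ∣ ((m : ℤ) - (j : ℤ)) * (Nat.gcd r s : ℤ) →
        dotProduct
          (fun i : Fin (r + s) => (μ ^ (m * ((i : ℕ) + 1)) * ρ ^ ((i : ℕ) + 1))⁻¹) v = 0) := by
  have hn : 0 < r + s := by omega
  have hμ0 : μ ≠ 0 := by
    intro h
    have := hμ.pow_eq_one
    rw [h, zero_pow hn.ne'] at this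
    exact zero_ne_one this
  have hρ0 : ρ ≠ 0 := by
    intro h
    apply ha0
    rw [← hρ, h, zero_pow hn.ne']
  have hncast : ((r + s : ℕ) : k) ≠ 0 := Nat.cast_ne_zero.mpr hn.ne'
  have hQP := Qmat_mul_Pmat hn hμ hρ0
  have hAP := A0_mul_Pmat r s hμ hρ
  have hset : ((fun m : ℕ => fun i : Fin (r + s) => μ ^ (m * ((i : ℕ) + 1)) * ρ ^ ((i : ℕ) + 1)) ''
        {m : ℕ | m ∈ Finset.Icc 1 (r + s) ∧
          ((r + s : ℕ) : ℤ) ∣ ((m : ℤ) - (j : ℤ)) * (Nat.gcd r s : ℤ)})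
      = ((fun m : Fin (r + s) => fun i => Pmat (r + s) μ ρ i m) ''
        {m : Fin (r + s) | μ ^ (r * ((m : ℕ) + 1)) * ρ ^ r = μ ^ (r * j) * ρ ^ r}) := by
    ext f
    simp only [Set.mem_image, Set.mem_setOf_eq, Finset.mem_Icc]
    constructor
    · rintro ⟨m, ⟨⟨hm1, hm2⟩, hdvd⟩, rfl⟩
      refine ⟨⟨m - 1, by omega⟩, ?_, ?_⟩
      · rw [dvec_eq_lam_iff r s hr hμ hμ0 hρ0 j]
        have hval : ((⟨m - 1, by omega⟩ : Fin (r + s)) : ℕ) = m - 1 := rfl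
        have he : ((((⟨m - 1, by omega⟩ : Fin (r + s)) : ℕ) : ℤ) + 1) - (j : ℤ)
            = (m : ℤ) - (j : ℤ) := by rw [hval]; omega
        rw [he]
        exact hdvd
      · funext i
        show μ ^ ((m - 1 + 1) * ((i : ℕ) + 1)) * ρ ^ ((i : ℕ) + 1)
          = μ ^ (m * ((i : ℕ) + 1)) * ρ ^ ((i : ℕ) + 1)
        rw [show m - 1 + 1 = m by omega]
    · rintro ⟨m, hm, rfl⟩
      have hmlt : (m : ℕ) < r + s := m.2
      refine ⟨(m : ℕ) + 1, ⟨⟨by omega, by omega⟩, ?_⟩, rfl⟩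
      have h1 := (dvec_eq_lam_iff r s hr hμ hμ0 hρ0 j m).mp hm
      have he : ((((m : ℕ) + 1 : ℕ) : ℤ) - (j : ℤ)) * (Nat.gcd r s : ℤ)
          = ((((m : ℕ) : ℤ) + 1) - (j : ℤ)) * (Nat.gcd r s : ℤ) := by push_cast; ring
      rw [he]
      exact h1
  constructor
  · rw [aux_ker hQP hAP, hset]
  · intro v
    rw [aux_range hQP hAP]
    have hQv : ∀ m : Fin (r + s), (Qmat (r + s) μ ρ *ᵥ v) m
        = ((r + s : ℕ) : k)⁻¹ * dotProduct
            (fun i : Fin (r + s) =>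
              (μ ^ (((m : ℕ) + 1) * ((i : ℕ) + 1)) * ρ ^ ((i : ℕ) + 1))⁻¹) v := by
      intro m
      simp only [Qmat, Matrix.mulVec, dotProduct, Finset.mul_sum, mul_assoc]
    constructor
    · intro h m hm hdvd
      rw [Finset.mem_Icc] at hm
      obtain ⟨hm1, hm2⟩ := hm
      have hdv : μ ^ (r * (((⟨m - 1, by omega⟩ : Fin (r + s)) : ℕ) + 1)) * ρ ^ r
          = μ ^ (r * j) * ρ ^ r := by
        rw [dvec_eq_lam_iff r s hr hμ hμ0 hρ0 j]
        have hval : ((⟨m - 1, by omega⟩ : Fin (r + s)) : ℕ) = m - 1 := rfl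
        have he : ((((⟨m - 1, by omega⟩ : Fin (r + s)) : ℕ) : ℤ) + 1) - (j : ℤ)
            = (m : ℤ) - (j : ℤ) := by rw [hval]; omega
        rw [he]
        exact hdvd
      have h0 := h ⟨m - 1, by omega⟩ hdv
      rw [hQv] at h0
      rcases mul_eq_zero.mp h0 with h1 | h1
      · exact absurd h1 (inv_ne_zero hncast)
      · have hfun : (fun i : Fin (r + s) =>
            (μ ^ ((((⟨m - 1, by omega⟩ : Fin (r + s)) : ℕ) + 1) * ((i : ℕ) + 1))
              * ρ ^ ((i : ℕ) + 1))⁻¹)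
            = (fun i : Fin (r + s) => (μ ^ (m * ((i : ℕ) + 1)) * ρ ^ ((i : ℕ) + 1))⁻¹) := by
          funext i
          show (μ ^ ((m - 1 + 1) * ((i : ℕ) + 1)) * ρ ^ ((i : ℕ) + 1))⁻¹ = _
          rw [show m - 1 + 1 = m by omega]
        rw [hfun] at h1
        exact h1
    · intro h m hdv
      rw [hQv, mul_eq_zero]
      right
      have hmlt : (m : ℕ) < r + s := m.2
      have h1 := (dvec_eq_lam_iff r s hr hμ hμ0 hρ0 j m).mp hdv
      have he : ((((m : ℕ) + 1 : ℕ) : ℤ) - (j : ℤ)) * (Nat.gcd r s : ℤ)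
          = ((((m : ℕ) : ℤ) + 1) - (j : ℤ)) * (Nat.gcd r s : ℤ) := by push_cast; ring
      exact h ((m : ℕ) + 1) (Finset.mem_Icc.mpr ⟨by omega, by omega⟩) (by rw [he]; exact h1)
end
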